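/- arXiv:1506.08204 — 8 statements merged into one kernel-verified Lean document; each statement's English description precedes it below -/
import Mathlib

section
/- For every n×n symmetric diagonally dominant matrix M and every real α ≥ 0, there exists a subset F of the indices {1,…,n} with |F| ≥ n/(8(1+α)) such that the principal submatrix M_{FF} is α-strongly diagonally dominant. -/
open Matrix BigOperators Finset
open scoped Classical

noncomputable section

/-- Loewner order: `PSDLE A B` means `A ⪯ B`, i.e. `B - A` is positive semidefinite. -/
def PSDLE {n : Type*} [Fintype n] (A B : Matrix n n ℝ) : Prop :=
  (B - A).PosSemidef

/-- `ApproxEps A ε B` means `A ≈_ε B`, i.e. `e^ε • B ⪰ A ⪰ e^{-ε} • B`. -/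
def ApproxEps {n : Type*} [Fintype n] (A : Matrix n n ℝ) (ε : ℝ) (B : Matrix n n ℝ) : Prop :=
  PSDLE A (Real.exp ε • B) ∧ PSDLE (Real.exp (-ε) • B) A

/-- `M` is α-strongly diagonally dominant:
`M_{ii} ≥ (1+α)·Σ_{j≠i} |M_{ij}|` for every `i`. -/
def IsStronglyDD {n : Type*} [Fintype n] [DecidableEq n] (α : ℝ) (M : Matrix n n ℝ) : Prop :=
  ∀ i, (1 + α) * ∑ j ∈ Finset.univ.erase i, |M i j| ≤ M i i

/-- A Laplacian matrix: symmetric, nonpositive off-diagonal entries, zero row sums. -/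
def IsLaplacian {n : Type*} [Fintype n] (L : Matrix n n ℝ) : Prop :=
  L.IsSymm ∧ (∀ i j, i ≠ j → L i j ≤ 0) ∧ ∀ i, ∑ j, L i j = 0

/-- An SDDM matrix: symmetric positive definite, nonpositive off-diagonal entries,
and each diagonal entry at least the sum of absolute values of the off-diagonal
entries in its row. -/
def IsSDDM {n : Type*} [Fintype n] [DecidableEq n] (M : Matrix n n ℝ) : Prop :=
  M.IsSymm ∧ M.PosDef ∧ (∀ i j, i ≠ j → M i j ≤ 0) ∧
    ∀ i, ∑ j ∈ Finset.univ.erase i, |M i j| ≤ M i i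

/-! Colour the indices with `t = ⌈1 + α⌉` colours so as to minimise the total weight `∑ |M i j|`
of monochromatic pairs `i ≠ j`. At a minimiser no index gains by changing its colour; by symmetry
of `M` this says that the mass of row `i` inside its own colour class is the least of its `t`
colour masses, hence at most `(∑_{j ≠ i} |M i j|) / t ≤ M i i / (1 + α)`. So every colour class is
α-strongly diagonally dominant, and the largest one has at least `n / t` elements. -/

theorem Finset.sum_erase_coe_sort {ι M : Type*} [DecidableEq ι] [AddCommMonoid M] (s : Finset ι)
    (i : s) (g : ι → M) : ∑ j ∈ univ.erase i, g j = ∑ j ∈ s.erase i, g j := by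
  have : s.erase i = (univ.erase i).map (Function.Embedding.subtype (· ∈ s)) := by
    ext j; simp [and_comm]
  rw [this, sum_map]
  rfl

namespace Coloring

variable {ι κ : Type*} [Fintype ι] [DecidableEq ι] [DecidableEq κ] (w : ι → ι → ℝ)

def colorMass (f : ι → κ) (i : ι) (c : κ) : ℝ :=
  ∑ j ∈ univ.erase i, if f j = c then w i j else 0

def monochromaticWeight (f : ι → κ) : ℝ :=
  ∑ i, colorMass w f i (f i)

theorem colorMass_eq_sum_erase (f : ι → κ) (i : ι) (c : κ) :
    colorMass w f i c = ∑ j ∈ (univ.filter (f · = c)).erase i, w i j := by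
  rw [colorMass, ← sum_filter, filter_erase]

theorem colorMass_nonneg (hw : ∀ i j, 0 ≤ w i j) (f : ι → κ) (i : ι) (c : κ) :
    0 ≤ colorMass w f i c :=
  sum_nonneg fun j _ => by split_ifs <;> simp [hw]

theorem sum_colorMass [Fintype κ] (f : ι → κ) (i : ι) :
    ∑ c, colorMass w f i c = ∑ j ∈ univ.erase i, w i j := by
  simp only [colorMass]
  rw [Finset.sum_comm]
  exact sum_congr rfl fun j _ => by simp

theorem colorMass_update (f : ι → κ) (i : ι) (c : κ) :
    colorMass w (Function.update f i c) i = colorMass w f i := by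
  ext c'
  refine sum_congr rfl fun j hj => ?_
  rw [Function.update_of_ne (ne_of_mem_erase hj)]

theorem monochromaticWeight_eq (hw : ∀ i j, w i j = w j i) (f : ι → κ) (i : ι) :
    monochromaticWeight w f = 2 * colorMass w f i (f i) +
      ∑ k ∈ univ.erase i, ∑ j ∈ (univ.erase k).erase i, if f j = f k then w k j else 0 := by
  have hcol : ∑ k ∈ univ.erase i, (if f i = f k then w k i else 0) = colorMass w f i (f i) :=
    sum_congr rfl fun k _ => by simp only [hw k i, eq_comm]
  have hrow : ∀ k ∈ univ.erase i, colorMass w f k (f k) = (if f i = f k then w k i else 0) +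
      ∑ j ∈ (univ.erase k).erase i, if f j = f k then w k j else 0 := fun k hk =>
    (add_sum_erase _ _ (mem_erase.2 ⟨(ne_of_mem_erase hk).symm, mem_univ i⟩)).symm
  rw [monochromaticWeight, ← add_sum_erase _ _ (mem_univ i), sum_congr rfl hrow, sum_add_distrib,
    hcol]
  ring

theorem monochromaticWeight_update_sub (hw : ∀ i j, w i j = w j i) (f : ι → κ) (i : ι) (c : κ) :
    monochromaticWeight w (Function.update f i c) - monochromaticWeight w f =
      2 * (colorMass w f i c - colorMass w f i (f i)) := by
  have hrest : ∀ k ∈ univ.erase i, ∀ j ∈ (univ.erase k).erase i,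
      (if Function.update f i c j = Function.update f i c k then w k j else 0) =
        if f j = f k then w k j else 0 := fun k hk j hj => by
    rw [Function.update_of_ne (ne_of_mem_erase hj), Function.update_of_ne (ne_of_mem_erase hk)]
  rw [monochromaticWeight_eq w hw _ i, monochromaticWeight_eq w hw f i, colorMass_update,
    Function.update_self, sum_congr rfl fun k hk => sum_congr rfl (hrest k hk)]
  ring

theorem colorMass_le_of_minimal (hw : ∀ i j, w i j = w j i) {f : ι → κ}
    (hf : ∀ g : ι → κ, monochromaticWeight w f ≤ monochromaticWeight w g) (i : ι) (c : κ) :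
    colorMass w f i (f i) ≤ colorMass w f i c := by
  have := monochromaticWeight_update_sub w hw f i c
  linarith [hf (Function.update f i c)]

theorem exists_card_mul_colorMass_le [Fintype κ] [Nonempty κ] (hw : ∀ i j, w i j = w j i) :
    ∃ f : ι → κ, ∀ i, Fintype.card κ * colorMass w f i (f i) ≤ ∑ j ∈ univ.erase i, w i j := by
  obtain ⟨f, hf⟩ := Finite.exists_min (monochromaticWeight w : (ι → κ) → ℝ)
  refine ⟨f, fun i => ?_⟩
  calc Fintype.card κ * colorMass w f i (f i) = ∑ _c : κ, colorMass w f i (f i) := by simp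
    _ ≤ ∑ c, colorMass w f i c := sum_le_sum fun c _ => colorMass_le_of_minimal w hw hf i c
    _ = ∑ j ∈ univ.erase i, w i j := sum_colorMass w f i

end Coloring

/-- For every n×n symmetric diagonally dominant matrix `M` and every
real `α ≥ 0`, there exists a subset `F` of the indices with `|F| ≥ n/(8(1+α))`
such that the principal submatrix `M_FF` is α-strongly diagonally dominant. -/
theorem sdd_subset_exists (n : ℕ) (M : Matrix (Fin n) (Fin n) ℝ) (α : ℝ)
    (hsym : M.IsSymm)
    (hdd : ∀ i, ∑ j ∈ Finset.univ.erase i, |M i j| ≤ M i i)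
    (hα : 0 ≤ α) :
    ∃ F : Finset (Fin n),
      (n : ℝ) / (8 * (1 + α)) ≤ (F.card : ℝ) ∧
      IsStronglyDD α (M.submatrix (fun i : F => (i : Fin n)) (fun j : F => (j : Fin n))) := by
  set t := ⌈1 + α⌉₊
  have ht : 1 + α ≤ t := Nat.le_ceil _
  have ht' : (t : ℝ) < 2 + α := by linarith [Nat.ceil_lt_add_one (by linarith : 0 ≤ 1 + α)]
  have : Nonempty (Fin t) := ⟨⟨0, by exact_mod_cast (by linarith : (0 : ℝ) < t)⟩⟩
  obtain ⟨f, hf⟩ := Coloring.exists_card_mul_colorMass_le (κ := Fin t) (fun i j => |M i j|)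
    fun i j => by rw [hsym.apply]
  obtain ⟨c, hc⟩ := Fintype.exists_le_card_fiber_of_nsmul_le_card f (b := (n : ℝ) / t)
    (by simp [mul_div_cancel₀ _ (by linarith : (t : ℝ) ≠ 0)])
  refine ⟨univ.filter (f · = c), le_trans (div_le_div_of_nonneg_left n.cast_nonneg
    (by linarith : (0 : ℝ) < t) (by linarith : (t : ℝ) ≤ 8 * (1 + α))) hc, fun i => ?_⟩
  have hi : f i = c := (mem_filter.1 i.2).2
  calc (1 + α) * ∑ j ∈ univ.erase i, |M i j|
      = (1 + α) * Coloring.colorMass (fun i j => |M i j|) f i (f i) := by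
        rw [Coloring.colorMass_eq_sum_erase, hi]
        exact congrArg _ (Finset.sum_erase_coe_sort _ i fun j => |M i j|)
    _ ≤ t * Coloring.colorMass (fun i j => |M i j|) f i (f i) :=
        mul_le_mul_of_nonneg_right ht (Coloring.colorMass_nonneg _ (fun _ _ => abs_nonneg _) _ _ _)
    _ ≤ M i i := by simpa using (hf i).trans (hdd i)
end
end

section
/- For every n×n symmetric diagonally dominant matrix M and every real α ≥ 0, there exists a subset F of the indices with |F| ≥ n/(16(1+α)) such that the principal submatrix M_{FF} is α-strongly diagonally dominant and, for every i ∈ F, the number of nonzero entries of the i-th column of M is at most 2m/n, where m is the total number of nonzero entries of M. -/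
/-! Columns with at most twice the average number of nonzeros are at least half of all
indices (Markov). Inside such a set `H` of diagonally dominant rows, average over all
`r`-subsets `S` with `r ≈ |H|/(4(1+α))`. An index `i ∈ S` violating strong dominance within `S`
has `(1+α) ∑_{j ∈ S, j ≠ i} |M i j| / M i i > 1`; a pair `i ≠ j` lies in `S` with probability
`r(r-1)/(|H|(|H|-1))`, so the expected number of violators is at most `r/2`. Dropping the
violators of a good `S` keeps the remaining indices valid, since off-diagonal row sums only
shrink with the index set. -/

open Matrix BigOperators Finset
open scoped Classical

noncomputable section

variable {ι : Type*}

theorem card_le_two_mul_card_filter_le_two_mul_average [Fintype ι] (f : ι → ℝ)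
    (hf : ∀ i, 0 ≤ f i) :
    (Fintype.card ι : ℝ) ≤ 2 * #{i | f i ≤ 2 * (∑ j, f j) / Fintype.card ι} := by
  set A := ∑ j, f j
  set n := (Fintype.card ι : ℝ)
  have hsplit : (#{i | f i ≤ 2 * A / n} : ℝ) + #{i | ¬ f i ≤ 2 * A / n} = n := by
    rw [← Nat.cast_add, card_filter_add_card_filter_not, card_univ]
  set B := univ.filter fun i => ¬ f i ≤ 2 * A / n
  suffices 2 * (#B : ℝ) ≤ n by linarith
  rcases B.eq_empty_or_nonempty with hB | ⟨b, hb⟩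
  · simp [hB, n]
  have hbA : 2 * A / n < f b := not_le.1 (mem_filter.1 hb).2
  have hn : 0 < n := Nat.cast_pos.2 (Fintype.card_pos_iff.2 ⟨b⟩)
  have hA : 0 < A :=
    (div_nonneg (mul_nonneg zero_le_two (sum_nonneg fun i _ => hf i)) hn.le).trans_lt
      (hbA.trans_le (single_le_sum (fun j _ => hf j) (mem_univ b)))
  have hB : #B • (2 * A / n) ≤ A :=
    (card_nsmul_le_sum B f _ fun i hi => (not_le.1 (mem_filter.1 hi).2).le).trans
      (sum_le_sum_of_subset_of_nonneg (subset_univ B) fun i _ _ => hf i)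
  rw [nsmul_eq_mul, mul_div_assoc', div_le_iff₀ hn] at hB
  nlinarith

theorem Matrix.sum_card_col_ne_zero [Fintype ι] {R : Type*} [Zero R] (M : Matrix ι ι R) :
    ∑ i, #{j | M j i ≠ 0} = #{p : ι × ι | M p.1 p.2 ≠ 0} := by
  simp only [card_filter, Fintype.sum_prod_type]
  exact sum_comm

theorem Nat.choose_sub_two_mul (h r : ℕ) (hr : 2 ≤ r) :
    (h - 2).choose (r - 2) * (h * (h - 1)) = h.choose r * (r * (r - 1)) := by
  rcases lt_or_ge h 2 with hh | hh
  · rw [Nat.choose_eq_zero_of_lt (hh.trans_le hr)]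
    interval_cases h <;> simp
  obtain ⟨s, rfl⟩ := Nat.exists_eq_add_of_le' hr
  obtain ⟨m, rfl⟩ := Nat.exists_eq_add_of_le' hh
  have h1 := Nat.add_one_mul_choose_eq m s
  have h2 := Nat.add_one_mul_choose_eq (m + 1) (s + 1)
  simp only [Nat.add_sub_cancel, Nat.add_succ_sub_one]
  grind

section DecidableEq

variable [DecidableEq ι]

theorem Finset.sum_powersetCard_sum_sum_erase (H : Finset ι) {r : ℕ} (hr : 2 ≤ r)
    (f : ι → ι → ℝ) :
    ∑ S ∈ H.powersetCard r, ∑ i ∈ S, ∑ j ∈ S.erase i, f i j =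
      (#H - 2).choose (r - 2) * ∑ i ∈ H, ∑ j ∈ H.erase i, f i j := by
  rw [mul_sum, sum_comm' (t' := H) (s' := fun i => (H.powersetCard r).filter (i ∈ ·))
    (by intro S i; simp only [mem_filter, mem_powersetCard]; grind)]
  refine sum_congr rfl fun i hi => ?_
  rw [sum_comm' (t' := H.erase i) (s' := fun j => (H.powersetCard r).filter ({i, j} ⊆ ·))
    (by intro S j; simp only [mem_filter, mem_powersetCard, mem_erase, insert_subset_iff,
      singleton_subset_iff]; grind), mul_sum]
  refine sum_congr rfl fun j hj => ?_
  have hij : ({i, j} : Finset ι) ⊆ H :=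
    insert_subset hi (singleton_subset_iff.2 (mem_of_mem_erase hj))
  have hcard : #({i, j} : Finset ι) = 2 := card_pair (ne_of_mem_erase hj).symm
  rw [sum_const, card_filter_powersetCard_subset _ _ _ hij (hcard ▸ hr), hcard, nsmul_eq_mul]

def IsStronglyDDOn (α : ℝ) (M : Matrix ι ι ℝ) (F : Finset ι) : Prop :=
  ∀ i ∈ F, (1 + α) * ∑ j ∈ F.erase i, |M i j| ≤ M i i

variable {α : ℝ} {M : Matrix ι ι ℝ}

theorem isStronglyDD_submatrix_iff {F : Finset ι} :
    IsStronglyDD α (M.submatrix (fun i : F => (i : ι)) (fun j : F => (j : ι))) ↔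
      IsStronglyDDOn α M F := by
  have hsum : ∀ i : F, ∑ j ∈ univ.erase i, |M i j| = ∑ j ∈ F.erase i, |M i j| := fun i => by
    rw [sum_erase_eq_sub (mem_univ i), sum_erase_eq_sub i.2, sum_coe_sort F fun j => |M i j|]
  simp only [IsStronglyDD, IsStronglyDDOn, submatrix_apply, hsum, Subtype.forall]

theorem IsStronglyDDOn.of_superset (hα : 0 ≤ 1 + α) {G S : Finset ι} (hGS : G ⊆ S)
    (h : ∀ i ∈ G, (1 + α) * ∑ j ∈ S.erase i, |M i j| ≤ M i i) : IsStronglyDDOn α M G :=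
  fun i hi => (mul_le_mul_of_nonneg_left (sum_le_sum_of_subset_of_nonneg
    (erase_subset_erase i hGS) fun _ _ _ => abs_nonneg _) hα).trans (h i hi)

def violators (α : ℝ) (M : Matrix ι ι ℝ) (S : Finset ι) : Finset ι :=
  S.filter fun i => ¬ (1 + α) * ∑ j ∈ S.erase i, |M i j| ≤ M i i

theorem card_violators_le (hα : 0 ≤ 1 + α) {S : Finset ι} (hS : IsStronglyDDOn 0 M S) :
    (#(violators α M S) : ℝ) ≤ (1 + α) * ∑ i ∈ S, ∑ j ∈ S.erase i, |M i j| / M i i := by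
  rw [violators, card_filter]
  push_cast
  rw [mul_sum]
  refine sum_le_sum fun i hi => ?_
  have hrow : ∑ j ∈ S.erase i, |M i j| ≤ M i i := by simpa using hS i hi
  have hsum_nonneg : 0 ≤ ∑ j ∈ S.erase i, |M i j| := sum_nonneg fun _ _ => abs_nonneg _
  rw [← sum_div]
  split_ifs with hgood
  · exact mul_nonneg hα (div_nonneg hsum_nonneg (hsum_nonneg.trans hrow))
  -- `M i i = 0` makes the division junk, but then row `i` vanishes on `S` and `i` is no violator.
  · have hMii : 0 < M i i := by
      refine (hsum_nonneg.trans hrow).lt_of_ne fun h0 => hgood ?_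
      have : ∑ j ∈ S.erase i, |M i j| = 0 := le_antisymm (h0 ▸ hrow) hsum_nonneg
      rw [this, mul_zero, ← h0]
    rw [mul_div_assoc', le_div_iff₀ hMii, one_mul]
    exact (not_le.1 hgood).le

theorem sum_card_violators_le (hα : 0 ≤ 1 + α) {H : Finset ι} (hH : IsStronglyDDOn 0 M H)
    {r : ℕ} (hr : 2 ≤ r) (hrH : r ≤ #H) (hrα : 2 * (1 + α) * (r - 1) ≤ #H - 1) :
    ∑ S ∈ H.powersetCard r, (#(violators α M S) : ℝ) ≤ #(H.powersetCard r) * (r / 2 : ℝ) := by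
  set w := fun i j => |M i j| / M i i
  have hw : ∑ i ∈ H, ∑ j ∈ H.erase i, w i j ≤ #H := by
    refine (sum_le_card_nsmul H _ 1 fun i hi => ?_).trans_eq (by simp)
    have hrow : ∑ j ∈ H.erase i, |M i j| ≤ M i i := by simpa using hH i hi
    rw [← sum_div]
    exact div_le_one_of_le₀ hrow ((sum_nonneg fun _ _ => abs_nonneg _).trans hrow)
  have hchoose : ((#H - 2).choose (r - 2) : ℝ) * (#H * (#H - 1)) =
      (#H).choose r * (r * (r - 1)) := by
    have h := congrArg (Nat.cast (R := ℝ)) (Nat.choose_sub_two_mul (#H) r hr)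
    push_cast [Nat.cast_sub (by omega : 1 ≤ #H), Nat.cast_sub (by omega : 1 ≤ r)] at h
    exact h
  have hH1 : (0 : ℝ) < #H - 1 := by
    have : (2 : ℝ) ≤ #H := by exact_mod_cast hr.trans hrH
    linarith
  calc ∑ S ∈ H.powersetCard r, (#(violators α M S) : ℝ)
      ≤ ∑ S ∈ H.powersetCard r, (1 + α) * ∑ i ∈ S, ∑ j ∈ S.erase i, w i j :=
        sum_le_sum fun S hS => card_violators_le hα
          (.of_superset (by norm_num) (mem_powersetCard.1 hS).1 fun i hi =>
            hH i ((mem_powersetCard.1 hS).1 hi))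
    _ = (1 + α) * (#H - 2).choose (r - 2) * ∑ i ∈ H, ∑ j ∈ H.erase i, w i j := by
        rw [← mul_sum, sum_powersetCard_sum_sum_erase H hr, mul_assoc]
    _ ≤ (1 + α) * (#H - 2).choose (r - 2) * #H :=
        mul_le_mul_of_nonneg_left hw (by positivity)
    _ ≤ #(H.powersetCard r) * (r / 2 : ℝ) := by
        rw [card_powersetCard]
        refine le_of_mul_le_mul_right ?_ hH1
        calc (1 + α) * (#H - 2).choose (r - 2) * #H * (#H - 1)
            = (#H).choose r * (r / 2) * (2 * (1 + α) * (r - 1)) := by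
              linear_combination (1 + α) * hchoose
          _ ≤ (#H).choose r * (r / 2) * (#H - 1) :=
              mul_le_mul_of_nonneg_left hrα (by positivity)

theorem exists_isStronglyDDOn_subset_of_two_le (hα : 0 ≤ 1 + α) {H : Finset ι}
    (hH : IsStronglyDDOn 0 M H) {r : ℕ} (hr : 2 ≤ r) (hrH : r ≤ #H)
    (hrα : 2 * (1 + α) * (r - 1) ≤ #H - 1) :
    ∃ F ⊆ H, IsStronglyDDOn α M F ∧ r ≤ 2 * #F := by
  set good := fun S : Finset ι =>
    S.filter fun i => (1 + α) * ∑ j ∈ S.erase i, |M i j| ≤ M i i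
  have hgood : ∑ S ∈ H.powersetCard r, (r / 2 : ℝ) ≤
      ∑ S ∈ H.powersetCard r, (#(good S) : ℝ) := by
    have hsplit : ∀ S ∈ H.powersetCard r, (#(good S) : ℝ) = r - #(violators α M S) :=
      fun S hS => by
        rw [eq_sub_iff_add_eq, ← Nat.cast_add, violators, card_filter_add_card_filter_not,
          (mem_powersetCard.1 hS).2]
    rw [sum_congr rfl hsplit, sum_sub_distrib, sum_const, sum_const, nsmul_eq_mul,
      nsmul_eq_mul]
    linarith [sum_card_violators_le hα hH hr hrH hrα]
  obtain ⟨S, hS, hSgood⟩ := exists_le_of_sum_le (powersetCard_nonempty.2 hrH) hgood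
  refine ⟨good S, (filter_subset _ S).trans (mem_powersetCard.1 hS).1,
    .of_superset hα (filter_subset _ S) fun i hi => (mem_filter.1 hi).2, ?_⟩
  have : (r : ℝ) ≤ 2 * #(good S) := by linarith
  exact_mod_cast this

theorem exists_isStronglyDDOn_subset (hα : 0 ≤ α) {H : Finset ι} (hH : IsStronglyDDOn 0 M H) :
    ∃ F ⊆ H, IsStronglyDDOn α M F ∧ (#H : ℝ) ≤ 8 * (1 + α) * #F := by
  rcases H.eq_empty_or_nonempty with rfl | ⟨i, hi⟩
  · exact ⟨∅, subset_rfl, fun _ h => absurd h (notMem_empty _), by simp⟩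
  by_cases hsmall : (#H : ℝ) ≤ 4 * (1 + α)
  · refine ⟨{i}, singleton_subset_iff.2 hi, fun j hj => ?_, ?_⟩
    · rw [mem_singleton.1 hj, erase_singleton, sum_empty, mul_zero]
      exact (sum_nonneg fun _ _ => abs_nonneg _).trans (by simpa using hH i hi)
    · rw [card_singleton, Nat.cast_one]
      linarith
  have h4 : 0 < 4 * (1 + α) := by linarith
  set x := (#H : ℝ) / (4 * (1 + α))
  have hx1 : 1 < x := (one_lt_div h4).2 (not_le.1 hsmall)
  have hxH : 2 * (1 + α) * x = #H / 2 := by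
    simp only [x]
    field_simp
    ring
  obtain ⟨F, hFH, hF, hrF⟩ := exists_isStronglyDDOn_subset_of_two_le (α := α) (by linarith) hH
    (Nat.lt_ceil.2 (by exact_mod_cast hx1))
    (Nat.ceil_le.2 (div_le_self (by positivity) (by linarith)))
    (by nlinarith [Nat.ceil_lt_add_one (zero_le_one.trans hx1.le)])
  refine ⟨F, hFH, hF, ?_⟩
  have := (Nat.le_ceil x).trans (by exact_mod_cast hrF : (⌈x⌉₊ : ℝ) ≤ 2 * #F)
  rw [div_le_iff₀ h4] at this
  linarith

end DecidableEq

theorem sdd_low_degree_subset_exists_general (n : ℕ) (M : Matrix (Fin n) (Fin n) ℝ) (α : ℝ)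
    (hdd : ∀ i, ∑ j ∈ Finset.univ.erase i, |M i j| ≤ M i i)
    (hα : 0 ≤ α) :
    ∃ F : Finset (Fin n),
      (n : ℝ) / (16 * (1 + α)) ≤ (F.card : ℝ) ∧
      IsStronglyDD α (M.submatrix (fun i : F => (i : Fin n)) (fun j : F => (j : Fin n))) ∧
      ∀ i ∈ F,
        (((Finset.univ.filter fun j => M j i ≠ 0).card : ℝ)) ≤
          2 * (((Finset.univ : Finset (Fin n × Fin n)).filter
                  fun p => M p.1 p.2 ≠ 0).card : ℝ) / (n : ℝ) := by
  set H : Finset (Fin n) :=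
    {i | (#{j | M j i ≠ 0} : ℝ) ≤ 2 * #{p : Fin n × Fin n | M p.1 p.2 ≠ 0} / n}
  have hH : (n : ℝ) ≤ 2 * #H := by
    have := card_le_two_mul_card_filter_le_two_mul_average
      (fun i => (#{j | M j i ≠ 0} : ℝ)) fun _ => Nat.cast_nonneg _
    rwa [Fintype.card_fin, ← Nat.cast_sum, M.sum_card_col_ne_zero] at this
  have hddH : IsStronglyDDOn 0 M H :=
    .of_superset (by norm_num) (subset_univ H) fun i _ => by simpa using hdd i
  obtain ⟨F, hFH, hF, hcard⟩ := exists_isStronglyDDOn_subset hα hddH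
  refine ⟨F, ?_, isStronglyDD_submatrix_iff.2 hF, fun i hi => (mem_filter.1 (hFH hi)).2⟩
  rw [div_le_iff₀ (by positivity)]
  linarith

/-- For every n×n symmetric diagonally dominant matrix `M` and every
`α ≥ 0`, there exists a subset `F` of the indices with `|F| ≥ n/(16(1+α))` such
that `M_FF` is α-strongly diagonally dominant and every column indexed by `F`
has at most `2m/n` nonzero entries, where `m` is the total number of nonzero
entries of `M`. -/
theorem sdd_low_degree_subset_exists (n : ℕ) (M : Matrix (Fin n) (Fin n) ℝ) (α : ℝ)
    (hsym : M.IsSymm)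
    (hdd : ∀ i, ∑ j ∈ Finset.univ.erase i, |M i j| ≤ M i i)
    (hα : 0 ≤ α) :
    ∃ F : Finset (Fin n),
      (n : ℝ) / (16 * (1 + α)) ≤ (F.card : ℝ) ∧
      IsStronglyDD α (M.submatrix (fun i : F => (i : Fin n)) (fun j : F => (j : Fin n))) ∧
      ∀ i ∈ F,
        (((Finset.univ.filter fun j => M j i ≠ 0).card : ℝ)) ≤
          2 * (((Finset.univ : Finset (Fin n × Fin n)).filter
                  fun p => M p.1 p.2 ≠ 0).card : ℝ) / (n : ℝ) :=
  sdd_low_degree_subset_exists_general n M α hdd hα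
end
end

section
/- Let M be an SDDM matrix that is α-strongly diagonally dominant for some α ≥ 0, and write M = X + L where X is a nonnegative diagonal matrix and L is a Laplacian matrix. Then X ⪰ (α/2)·L. -/
open Matrix BigOperators Finset
open scoped Classical

noncomputable section

/-!
Let `D` be the diagonal part of `L`. Since `L` has zero row sums and nonpositive off-diagonal
entries, `2D - L` is diagonally dominant, hence positive semidefinite by Gershgorin, so
`(α/2) L ⪯ α D`. On the diagonal, strong dominance of `M = X + L` reads
`X_ii + L_ii ≥ (1 + α) L_ii`, i.e. `α D ⪯ X`.
-/

section

variable {n : Type*} [Fintype n] [DecidableEq n]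

theorem Matrix.IsHermitian.posSemidef_of_sum_abs_le_diag {A : Matrix n n ℝ}
    (hA : A.IsHermitian) (hdom : ∀ i, ∑ j ∈ univ.erase i, |A i j| ≤ A i i) :
    A.PosSemidef := by
  refine hA.posSemidef_iff_eigenvalues_nonneg.mpr fun i => show 0 ≤ hA.eigenvalues i from ?_
  have hμ : Module.End.HasEigenvalue (toLin' A) (hA.eigenvalues i) :=
    .of_mem_spectrum (by rw [spectrum_toLin']; exact hA.eigenvalues_mem_spectrum_real i)
  obtain ⟨k, hk⟩ := eigenvalue_mem_ball hμ
  simp only [Metric.mem_closedBall, Real.dist_eq, Real.norm_eq_abs] at hk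
  linarith [neg_abs_le (hA.eigenvalues i - A k k), hdom k]

namespace IsLaplacian

variable {L : Matrix n n ℝ}

theorem sum_abs_offDiag_eq_diag (hL : IsLaplacian L) (i : n) :
    ∑ j ∈ univ.erase i, |L i j| = L i i := by
  obtain ⟨-, hoff, hrow⟩ := hL
  have hsplit := add_sum_erase univ (L i) (mem_univ i)
  rw [hrow i] at hsplit
  have hneg : ∑ j ∈ univ.erase i, |L i j| = -∑ j ∈ univ.erase i, L i j := by
    rw [← sum_neg_distrib]
    exact sum_congr rfl fun j hj => abs_of_nonpos (hoff i j (ne_of_mem_erase hj).symm)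
  linarith

theorem psdle_two_smul_diagonal (hL : IsLaplacian L) :
    PSDLE L ((2 : ℝ) • diagonal L.diag) := by
  have hLherm : L.IsHermitian := hL.1
  refine (((isHermitian_diagonal _).smul (.all (2 : ℝ))).sub hLherm)
    |>.posSemidef_of_sum_abs_le_diag fun i => ?_
  have hoff : ∀ j ∈ univ.erase i, |((2 : ℝ) • diagonal L.diag - L) i j| = |L i j| := by
    intro j hj
    simp [diagonal_apply_ne _ (ne_of_mem_erase hj).symm]
  rw [sum_congr rfl hoff, hL.sum_abs_offDiag_eq_diag]
  simp only [Matrix.sub_apply, Matrix.smul_apply, diagonal_apply_eq, diag_apply, smul_eq_mul]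
  linarith

end IsLaplacian

end

theorem X_dominates_L_general {n : Type*} [Fintype n] [DecidableEq n]
    (M X L : Matrix n n ℝ) (α : ℝ)
    (hα : 0 ≤ α) (hsdd : IsStronglyDD α M)
    (hXdiag : ∀ i j, i ≠ j → X i j = 0)
    (hL : IsLaplacian L) (hdecomp : M = X + L) :
    PSDLE ((α / 2) • L) X := by
  set D := diagonal L.diag
  have hX : diagonal X.diag = X := IsDiag.diagonal_diag fun i j => hXdiag i j
  have hdiag_le (i : n) : α * L i i ≤ X i i := by
    have hoff : ∑ j ∈ univ.erase i, |M i j| = L i i := by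
      rw [← hL.sum_abs_offDiag_eq_diag i]
      refine sum_congr rfl fun j hj => ?_
      simp [hdecomp, hXdiag i j (ne_of_mem_erase hj).symm]
    have := hsdd i
    rw [hoff, hdecomp, Matrix.add_apply] at this
    linarith
  have hαD_le_X : PSDLE (α • D) X := by
    rw [PSDLE, ← hX, ← diagonal_smul, diagonal_sub, posSemidef_diagonal_iff]
    exact fun i => sub_nonneg.mpr (hdiag_le i)
  have hsplit : X - (α / 2) • L = (X - α • D) + (α / 2) • ((2 : ℝ) • D - L) := by
    module
  rw [PSDLE, hsplit]
  exact hαD_le_X.add (hL.psdle_two_smul_diagonal.smul (by positivity))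

/-- Let `M` be an SDDM matrix that is α-strongly diagonally dominant
for some `α ≥ 0`, and write `M = X + L` with `X` a nonnegative diagonal matrix
and `L` a Laplacian. Then `X ⪰ (α/2)·L`. -/
theorem X_dominates_L {n : Type*} [Fintype n] [DecidableEq n]
    (M X L : Matrix n n ℝ) (α : ℝ)
    (hM : IsSDDM M) (hα : 0 ≤ α) (hsdd : IsStronglyDD α M)
    (hXdiag : ∀ i j, i ≠ j → X i j = 0) (hXnn : ∀ i, 0 ≤ X i i)
    (hL : IsLaplacian L) (hdecomp : M = X + L) :
    PSDLE ((α / 2) • L) X :=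
  X_dominates_L_general M X L α hα hsdd hXdiag hL hdecomp
end
end

section
/- Let X be a diagonal matrix with positive diagonal entries and L a Laplacian matrix of the same size with L ⪯ β·X for some 0 ≤ β < 1. Let k be an odd positive integer, set Z^{(k)} = Σ_{i=0}^{k} X^{−1}·(−L·X^{−1})^{i}, and set δ = β^{k}·(1+β)/(1−β^{k+1}). Then Z^{(k)} is invertible and X + L ⪯ (Z^{(k)})^{−1} ⪯ X + (1+δ)·L. -/
open Matrix BigOperators Finset
open scoped Classical

noncomputable section

/-!
Write `X = C Cᴴ` and `L = C diag(μ) Cᴴ` with `C` invertible, by diagonalizing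
`X^{-1/2} L X^{-1/2}`. Then `X⁻¹ (-L X⁻¹)^i = C⁻ᴴ diag((-μ)^i) C⁻¹`, so `Z^{(k)} = C⁻ᴴ diag(g) C⁻¹`
with `g = Σ_{i ≤ k} (-μ)^i = (1 - μ^{k+1}) / (1 + μ)` because `k + 1` is even, and
`(Z^{(k)})⁻¹ = C diag(g⁻¹) Cᴴ`. All three matrices being compared are congruent to diagonal
matrices through the same `C`, so both Loewner inequalities reduce to the scalar bounds
`1 + μ ≤ (1 + μ) / (1 - μ^{k+1}) ≤ 1 + (1 + δ) μ` for every `μ ∈ [0, β]`: here `μ ≥ 0` because a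
Laplacian is positive semidefinite (Gershgorin), and `μ ≤ β` is `L ⪯ β X`.
-/

section

variable {n : Type*} [Fintype n] [DecidableEq n]

theorem IsLaplacian.sum_erase_abs_eq {L : Matrix n n ℝ} (hL : IsLaplacian L) (i : n) :
    ∑ j ∈ Finset.univ.erase i, |L i j| = L i i := by
  have hrow := hL.2.2 i
  rw [← Finset.add_sum_erase _ _ (Finset.mem_univ i)] at hrow
  rw [Finset.sum_congr rfl fun j hj =>
    abs_of_nonpos (hL.2.1 i j (Finset.ne_of_mem_erase hj).symm), Finset.sum_neg_distrib]
  linarith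

theorem IsLaplacian.posSemidef {L : Matrix n n ℝ} (hL : IsLaplacian L) : L.PosSemidef := by
  have hH : L.IsHermitian := isHermitian_iff_isSymm.mpr hL.1
  rw [hH.posSemidef_iff_eigenvalues_nonneg]
  intro i
  show 0 ≤ hH.eigenvalues i
  have hμ : Module.End.HasEigenvalue (toLin' L) (hH.eigenvalues i) := by
    rw [Module.End.hasEigenvalue_iff_mem_spectrum, spectrum_toLin']
    exact hH.eigenvalues_mem_spectrum_real i
  obtain ⟨k, hk⟩ := eigenvalue_mem_ball hμ
  simp only [Real.norm_eq_abs, hL.sum_erase_abs_eq, Metric.mem_closedBall, Real.dist_eq] at hk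
  linarith [(abs_le.mp hk).1]

end

namespace Matrix

variable {n : Type*} [Fintype n] [DecidableEq n]

theorem IsHermitian.eq_eigenvectorUnitary_mul_diagonal_mul {A : Matrix n n ℝ}
    (hA : A.IsHermitian) :
    A = (hA.eigenvectorUnitary : Matrix n n ℝ) * diagonal hA.eigenvalues *
      (hA.eigenvectorUnitary : Matrix n n ℝ)ᴴ := by
  conv_lhs => rw [hA.spectral_theorem]
  simp [Unitary.conjStarAlgAut_apply, star_eq_conjTranspose]

theorem PosDef.exists_isUnit_eq_mul_conjTranspose {X : Matrix n n ℝ} (hX : X.PosDef) :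
    ∃ S : Matrix n n ℝ, IsUnit S ∧ X = S * Sᴴ := by
  set U : Matrix n n ℝ := (hX.isHermitian.eigenvectorUnitary : Matrix n n ℝ)
  set D : Matrix n n ℝ := diagonal fun i => √(hX.isHermitian.eigenvalues i)
  have hD : D * Dᴴ = diagonal hX.isHermitian.eigenvalues := by
    rw [diagonal_conjTranspose, diagonal_mul_diagonal]
    congr 1
    ext i
    simp [Real.mul_self_sqrt (hX.eigenvalues_pos i).le]
  refine ⟨U * D, ?_, ?_⟩
  · exact Unitary.isUnit_coe.mul <| isUnit_diagonal.mpr <| Pi.isUnit_iff.mpr fun i =>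
      (Real.sqrt_pos.mpr (hX.eigenvalues_pos i)).ne'.isUnit
  · calc X = U * (D * Dᴴ) * Uᴴ := by
          rw [hD]; exact hX.isHermitian.eq_eigenvectorUnitary_mul_diagonal_mul
      _ = U * D * (U * D)ᴴ := by rw [conjTranspose_mul]; simp only [mul_assoc]

theorem PosDef.exists_simultaneous_diagonalization {X L : Matrix n n ℝ} (hX : X.PosDef)
    (hL : L.IsHermitian) :
    ∃ (C : Matrix n n ℝ) (μ : n → ℝ), IsUnit C ∧ X = C * Cᴴ ∧ L = C * diagonal μ * Cᴴ := by
  obtain ⟨S, hS, rfl⟩ := hX.exists_isUnit_eq_mul_conjTranspose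
  have hM : (S⁻¹ * L * S⁻¹ᴴ).IsHermitian := isHermitian_mul_mul_conjTranspose _ hL
  set U : Matrix n n ℝ := (hM.eigenvectorUnitary : Matrix n n ℝ)
  have hUU : U * Uᴴ = 1 := mem_unitaryGroup_iff.mp hM.eigenvectorUnitary.2
  have hSS : S * S⁻¹ = 1 := mul_nonsing_inv S ((isUnit_iff_isUnit_det S).mp hS)
  refine ⟨S * U, hM.eigenvalues, hS.mul Unitary.isUnit_coe, ?_, ?_⟩
  · rw [conjTranspose_mul, mul_assoc, ← mul_assoc U, hUU, one_mul]
  · have hSS' : S⁻¹ᴴ * Sᴴ = 1 := by rw [← conjTranspose_mul, hSS, conjTranspose_one]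
    calc L = S * (S⁻¹ * L * S⁻¹ᴴ) * Sᴴ := by
          simp only [mul_assoc, hSS', mul_one]; rw [← mul_assoc, hSS, one_mul]
      _ = S * (U * diagonal hM.eigenvalues * Uᴴ) * Sᴴ := by
          rw [← hM.eq_eigenvectorUnitary_mul_diagonal_mul]
      _ = S * U * diagonal hM.eigenvalues * (S * U)ᴴ := by
          rw [conjTranspose_mul]; simp only [mul_assoc]

theorem posSemidef_mul_diagonal_mul_conjTranspose_iff {C : Matrix n n ℝ} (hC : IsUnit C)
    (v : n → ℝ) :
    (C * diagonal v * Cᴴ).PosSemidef ↔ ∀ i, 0 ≤ v i := by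
  rw [← star_eq_conjTranspose, hC.posSemidef_star_right_conjugate_iff, posSemidef_diagonal_iff]

theorem conj_pow {C : Matrix n n ℝ} (hC : IsUnit C) (A : Matrix n n ℝ) (i : ℕ) :
    (C * A * C⁻¹) ^ i = C * A ^ i * C⁻¹ := by
  lift C to (Matrix n n ℝ)ˣ using hC
  rw [← coe_units_inv]
  exact Units.conj_pow C A i

theorem inv_mul_neg_mul_inv_pow_eq {C : Matrix n n ℝ} (hC : IsUnit C) (μ : n → ℝ) (i : ℕ) :
    (C * Cᴴ)⁻¹ * (-(C * diagonal μ * Cᴴ * (C * Cᴴ)⁻¹)) ^ i =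
      Cᴴ⁻¹ * diagonal (-μ) ^ i * C⁻¹ := by
  have hC' : IsUnit C.det := (isUnit_iff_isUnit_det C).mp hC
  have hCH : IsUnit Cᴴ.det := by rw [det_conjTranspose]; exact hC'.star
  have h : -(C * diagonal μ * Cᴴ * (C * Cᴴ)⁻¹) = C * diagonal (-μ) * C⁻¹ := by
    simp only [mul_inv_rev, mul_assoc, mul_nonsing_inv_cancel_left Cᴴ _ hCH]
    rw [← mul_neg, ← neg_mul, diagonal_neg]
    rfl
  rw [h, conj_pow hC, mul_inv_rev]
  simp only [mul_assoc, nonsing_inv_mul_cancel_left C _ hC']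

theorem mul_diagonal_mul_conjTranspose_add (C : Matrix n n ℝ) (v w : n → ℝ) :
    C * diagonal v * Cᴴ + C * diagonal w * Cᴴ = C * diagonal (v + w) * Cᴴ := by
  rw [Pi.add_def, ← diagonal_add, mul_add, add_mul]

theorem smul_mul_diagonal_mul_conjTranspose (C : Matrix n n ℝ) (v : n → ℝ) (c : ℝ) :
    c • (C * diagonal v * Cᴴ) = C * diagonal (c • v) * Cᴴ := by
  rw [diagonal_smul, mul_smul_comm, smul_mul_assoc]

theorem psdle_mul_diagonal_mul_conjTranspose_iff {C : Matrix n n ℝ} (hC : IsUnit C)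
    {v w : n → ℝ} :
    PSDLE (C * diagonal v * Cᴴ) (C * diagonal w * Cᴴ) ↔ ∀ i, v i ≤ w i := by
  rw [PSDLE, ← sub_mul, ← mul_sub, diagonal_sub,
    posSemidef_mul_diagonal_mul_conjTranspose_iff hC]
  simp only [sub_nonneg]

theorem sum_inv_mul_neg_mul_inv_pow_eq {C : Matrix n n ℝ} (hC : IsUnit C) (μ : n → ℝ)
    (s : Finset ℕ) :
    ∑ i ∈ s, (C * Cᴴ)⁻¹ * (-(C * diagonal μ * Cᴴ * (C * Cᴴ)⁻¹)) ^ i =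
      Cᴴ⁻¹ * diagonal (fun j => ∑ i ∈ s, (-μ j) ^ i) * C⁻¹ := by
  simp only [inv_mul_neg_mul_inv_pow_eq hC, diagonal_pow, ← Finset.sum_mul, ← Finset.mul_sum]
  congr 2
  ext a b
  by_cases hab : a = b <;> simp [hab, Matrix.sum_apply]

theorem conjTranspose_inv_mul_diagonal_mul_inv_mul_eq_one {C : Matrix n n ℝ} (hC : IsUnit C)
    {g : n → ℝ} (hg : ∀ i, g i ≠ 0) : Cᴴ⁻¹ * diagonal g * C⁻¹ * (C * diagonal g⁻¹ * Cᴴ) = 1 := by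
  have hC' : IsUnit C.det := (isUnit_iff_isUnit_det C).mp hC
  have hCH : IsUnit Cᴴ.det := by rw [det_conjTranspose]; exact hC'.star
  have hgg : diagonal g * diagonal g⁻¹ = 1 := by
    rw [diagonal_mul_diagonal, ← diagonal_one]
    exact congrArg diagonal (funext fun i => mul_inv_cancel₀ (hg i))
  simp only [mul_assoc, nonsing_inv_mul_cancel_left C _ hC']
  rw [← mul_assoc (diagonal g), hgg, one_mul, nonsing_inv_mul Cᴴ hCH]

end Matrix

theorem geom_sum_neg_mul_one_add {R : Type*} [CommRing R] {k : ℕ} (hk : Odd k) (a : R) :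
    (∑ i ∈ Finset.range (k + 1), (-a) ^ i) * (1 + a) = 1 - a ^ (k + 1) := by
  have h := geom_sum_mul (-a) (k + 1)
  rw [hk.add_one.neg_pow] at h
  linear_combination -h

theorem inv_geom_sum_neg_eq {K : Type*} [Field K] {k : ℕ} (hk : Odd k) {a : K}
    (ha : 1 + a ≠ 0) :
    (∑ i ∈ Finset.range (k + 1), (-a) ^ i)⁻¹ = (1 + a) / (1 - a ^ (k + 1)) := by
  rw [← geom_sum_neg_mul_one_add hk, div_mul_cancel_right₀ ha]

theorem one_add_le_inv_geom_sum_neg {k : ℕ} (hk : Odd k) {a : ℝ} (ha0 : 0 ≤ a) (ha1 : a < 1) :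
    1 + a ≤ (∑ i ∈ Finset.range (k + 1), (-a) ^ i)⁻¹ := by
  have hpow : a ^ (k + 1) < 1 := pow_lt_one₀ ha0 ha1 k.succ_ne_zero
  rw [inv_geom_sum_neg_eq hk (by linarith), le_div_iff₀ (by linarith)]
  nlinarith [pow_nonneg ha0 (k + 1)]

theorem inv_geom_sum_neg_le {k : ℕ} (hk : Odd k) {a β : ℝ} (ha0 : 0 ≤ a) (haβ : a ≤ β)
    (hβ1 : β < 1) :
    (∑ i ∈ Finset.range (k + 1), (-a) ^ i)⁻¹ ≤
      1 + (1 + β ^ k * (1 + β) / (1 - β ^ (k + 1))) * a := by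
  have hβ0 : 0 ≤ β := ha0.trans haβ
  have hak : a ^ k ≤ β ^ k := pow_le_pow_left₀ ha0 haβ k
  have hak1 : a ^ (k + 1) ≤ β ^ (k + 1) := pow_le_pow_left₀ ha0 haβ (k + 1)
  have hβk1 : 0 < 1 - β ^ (k + 1) := sub_pos.mpr (pow_lt_one₀ hβ0 hβ1 k.succ_ne_zero)
  have hak1' : 0 < 1 - a ^ (k + 1) := by linarith
  -- the excess over `1 + a` is `a` times a quantity that increases with `a`
  have hsplit : (1 + a) / (1 - a ^ (k + 1)) =
      1 + a + a ^ k * (1 + a) / (1 - a ^ (k + 1)) * a := by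
    field_simp
    ring
  have hmono : a ^ k * (1 + a) / (1 - a ^ (k + 1)) ≤ β ^ k * (1 + β) / (1 - β ^ (k + 1)) :=
    div_le_div₀ (by positivity) (mul_le_mul hak (by linarith) (by linarith) (by positivity))
      hβk1 (by linarith)
  rw [inv_geom_sum_neg_eq hk (by linarith), hsplit]
  nlinarith

theorem power_series_approx_general {n : Type*} [Fintype n] [DecidableEq n]
    (X L : Matrix n n ℝ) (β : ℝ) (k : ℕ)
    (hXdiag : ∀ i j, i ≠ j → X i j = 0) (hXpos : ∀ i, 0 < X i i)
    (hL : IsLaplacian L)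
    (hβ1 : β < 1)
    (hLX : PSDLE L (β • X))
    (hk : Odd k) :
    IsUnit (∑ i ∈ Finset.range (k + 1), X⁻¹ * (-(L * X⁻¹)) ^ i) ∧
    PSDLE (X + L) (∑ i ∈ Finset.range (k + 1), X⁻¹ * (-(L * X⁻¹)) ^ i)⁻¹ ∧
    PSDLE (∑ i ∈ Finset.range (k + 1), X⁻¹ * (-(L * X⁻¹)) ^ i)⁻¹
      (X + (1 + β ^ k * (1 + β) / (1 - β ^ (k + 1))) • L) := by
  have hX : X.PosDef := by
    rw [← IsDiag.diagonal_diag hXdiag]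
    exact posDef_diagonal_iff.mpr hXpos
  obtain ⟨C, μ, hC, rfl, rfl⟩ :=
    hX.exists_simultaneous_diagonalization hL.posSemidef.isHermitian
  have hμ0 : ∀ j, 0 ≤ μ j :=
    (posSemidef_mul_diagonal_mul_conjTranspose_iff hC μ).mp hL.posSemidef
  have hX1 : C * Cᴴ = C * diagonal 1 * Cᴴ := by rw [Pi.one_def, diagonal_one, mul_one]
  rw [hX1, smul_mul_diagonal_mul_conjTranspose,
    psdle_mul_diagonal_mul_conjTranspose_iff hC] at hLX
  have hμβ : ∀ j, μ j ≤ β := fun j => by simpa using hLX j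
  have hlower j := one_add_le_inv_geom_sum_neg hk (hμ0 j) ((hμβ j).trans_lt hβ1)
  have hupper j := inv_geom_sum_neg_le hk (hμ0 j) (hμβ j) hβ1
  have hZ := conjTranspose_inv_mul_diagonal_mul_inv_mul_eq_one hC fun j =>
    (inv_pos.mp (lt_of_lt_of_le (by linarith [hμ0 j]) (hlower j))).ne'
  rw [sum_inv_mul_neg_mul_inv_pow_eq hC, inv_eq_right_inv hZ, hX1,
    smul_mul_diagonal_mul_conjTranspose, mul_diagonal_mul_conjTranspose_add,
    mul_diagonal_mul_conjTranspose_add, psdle_mul_diagonal_mul_conjTranspose_iff hC,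
    psdle_mul_diagonal_mul_conjTranspose_iff hC]
  refine ⟨(isUnit_iff_isUnit_det _).mpr (isUnit_det_of_right_inverse hZ), ?_, ?_⟩
  · simpa using hlower
  · simpa using hupper

/-- Let `X` be a diagonal matrix with positive diagonal entries and
`L` a Laplacian with `L ⪯ β·X` for some `0 ≤ β < 1`. For odd positive `k`, set
`Z = Σ_{i=0}^{k} X⁻¹·(−L·X⁻¹)^i` and `δ = β^k·(1+β)/(1−β^{k+1})`. Then `Z` is
invertible and `X + L ⪯ Z⁻¹ ⪯ X + (1+δ)·L`. -/
theorem power_series_approx {n : Type*} [Fintype n] [DecidableEq n]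
    (X L : Matrix n n ℝ) (β : ℝ) (k : ℕ)
    (hXdiag : ∀ i j, i ≠ j → X i j = 0) (hXpos : ∀ i, 0 < X i i)
    (hL : IsLaplacian L)
    (hβ0 : 0 ≤ β) (hβ1 : β < 1)
    (hLX : PSDLE L (β • X))
    (hk : Odd k) (hkpos : 0 < k) :
    IsUnit (∑ i ∈ Finset.range (k + 1), X⁻¹ * (-(L * X⁻¹)) ^ i) ∧
    PSDLE (X + L) (∑ i ∈ Finset.range (k + 1), X⁻¹ * (-(L * X⁻¹)) ^ i)⁻¹ ∧
    PSDLE (∑ i ∈ Finset.range (k + 1), X⁻¹ * (-(L * X⁻¹)) ^ i)⁻¹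
      (X + (1 + β ^ k * (1 + β) / (1 - β ^ (k + 1))) • L) :=
  power_series_approx_general X L β k hXdiag hXpos hL hβ1 hLX hk
end
end

section
/- Let n ≥ 1, k ≥ 2, w_1,…,w_n > 0 and δ > 0. Let G be the weighted star graph on vertex set {v_1,…,v_n, u} with an edge of weight w_i between u and v_i for each i. Let σ : {1,…,n} → {1,…,k} be any assignment, let W = δ^{−1}·Σ_i w_i, and let Ĝ be the weighted graph on vertex set {v_1,…,v_n, u_1,…,u_k} consisting of the complete graph on {u_1,…,u_k} in which every edge has weight W, together with, for each i, an edge of weight w_i between v_i and u_{σ(i)}. Let U = {u_2,…,u_k}. Then Schur(L_{Ĝ}, U) ⪯ L_G (identifying u_1 with u), and for every i the off-diagonal entry of Schur(L_{Ĝ},U) in position (u_1, v_i) is at most −w_i·(1 − 2δ); that is, in the Schur complement graph the edge between u_1 and v_i has weight at least w_i·(1 − 2δ). -/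
open Matrix BigOperators Finset
open scoped Classical

noncomputable section

/-- The Schur complement `Schur(M, F)` eliminating the first (`F`) block:
`M_CC - M_CF · M_FF⁻¹ · M_FC`. -/
def schurElimF {F C : Type*} [Fintype F] [Fintype C] [DecidableEq F]
    (M : Matrix (F ⊕ C) (F ⊕ C) ℝ) : Matrix C C ℝ :=
  M.toBlocks₂₂ - M.toBlocks₂₁ * M.toBlocks₁₁⁻¹ * M.toBlocks₁₂

/-- The Schur complement `Schur(M, S)` eliminating the second (`S`) block:
`M_CC - M_CS · M_SS⁻¹ · M_SC`. -/
def schurElimS {C S : Type*} [Fintype C] [Fintype S] [DecidableEq S]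
    (M : Matrix (C ⊕ S) (C ⊕ S) ℝ) : Matrix C C ℝ :=
  M.toBlocks₁₁ - M.toBlocks₁₂ * M.toBlocks₂₂⁻¹ * M.toBlocks₂₁

/-- The vector `e_u - e_v`. -/
def eVec {ι : Type*} [DecidableEq ι] (u v : ι) : ι → ℝ :=
  fun a => (if a = u then 1 else 0) - (if a = v then 1 else 0)

/-- The Laplacian of a single unit-weight edge `{u,v}`:
`(e_u - e_v)(e_u - e_v)ᵀ`. -/
def edgeL {ι : Type*} [DecidableEq ι] (u v : ι) : Matrix ι ι ℝ :=
  Matrix.vecMulVec (eVec u v) (eVec u v)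

/-!
Eliminating the copies `Sum.inr j` minimises the quadratic form of `L_Ĝ` over their values.
Giving every copy of `u` the value at `u` makes all clique edges have length zero and leaves
exactly the edges of the star, so `Schur(L_Ĝ, U) ⪯ L_G`.

The block of `L_Ĝ` on the eliminated copies is `diag d - W·J` with `d_j = (k + 1) W + s_j`,
where `s_j ≤ Σ wᵢ = δ W` is the weight hanging off copy `j`. The solution of
`(diag d - W·J) y = W·𝟙` is explicit, `y_j = W / ((1 - W Σ_l d_l⁻¹) d_j)`, and
`(k + 1) W ≤ d_j ≤ (k + 1 + δ) W` gives `y_j ≥ 1 / (1 + δ) ≥ 1 - 2δ`. The entry `(u₁, vᵢ)` of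
the Schur complement is `-wᵢ` if `vᵢ` hangs off `u₁` and `-wᵢ y_j` if it hangs off copy `j`.
-/

section EdgeLaplacian

variable {ι : Type*} [DecidableEq ι]

lemma eVec_apply (u v a : ι) :
    eVec u v a = (if a = u then 1 else 0) - if a = v then 1 else 0 := rfl

lemma edgeL_apply (u v a b : ι) : edgeL u v a b = eVec u v a * eVec u v b := rfl

lemma edgeL_isHermitian (u v : ι) : (edgeL u v).IsHermitian := by
  simp [edgeL, Matrix.IsHermitian]

lemma sum_sum_edgeL_apply_of_notMem_range {α : Type*} [Fintype α] {f : α → ι} (p : ι)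
    {q : ι} (hq : q ∉ Set.range f) :
    (∑ a', ∑ b', edgeL (f a') (f b')) p q = 0 := by
  simp only [Set.mem_range, not_exists] at hq
  simp [Matrix.sum_apply, edgeL_apply, eVec_apply, fun a => Ne.symm (hq a)]

lemma sum_sum_sub_mul_sub {α : Type*} [Fintype α] (x y : α → ℝ) :
    ∑ a, ∑ b, (x a - x b) * (y a - y b) =
      2 * (Fintype.card α * ∑ a, x a * y a - (∑ a, x a) * ∑ a, y a) := by
  simp only [sub_mul, mul_sub, Finset.sum_sub_distrib, Finset.sum_const, Finset.card_univ,
    nsmul_eq_mul, ← Finset.sum_mul, ← Finset.mul_sum]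
  ring

lemma sum_sum_edgeL_apply {α : Type*} [Fintype α] [DecidableEq α] {f : α → ι}
    (hf : Function.Injective f) (a b : α) :
    (∑ a', ∑ b', edgeL (f a') (f b')) (f a) (f b) =
      2 * ((Fintype.card α : ℝ) * (if a = b then 1 else 0) - 1) := by
  simp only [Matrix.sum_apply, edgeL_apply, eVec_apply, hf.eq_iff]
  rw [sum_sum_sub_mul_sub]
  simp

lemma dotProduct_edgeL_mulVec [Fintype ι] (u v : ι) (x : ι → ℝ) :
    x ⬝ᵥ edgeL u v *ᵥ x = (x u - x v) ^ 2 := by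
  have hdot : ∀ y : ι → ℝ, y ⬝ᵥ eVec u v = y u - y v := fun y => by
    simp [eVec, dotProduct, mul_sub, Finset.sum_sub_distrib]
  rw [edgeL, vecMulVec_mulVec, op_smul_eq_smul, dotProduct_smul, smul_eq_mul, hdot,
    dotProduct_comm, hdot, sq]

end EdgeLaplacian

section BlockMatrix

variable {C S : Type*} {M : Matrix (C ⊕ S) (C ⊕ S) ℝ}

lemma Matrix.IsHermitian.toBlocks₂₁_eq (hM : M.IsHermitian) : M.toBlocks₂₁ = M.toBlocks₁₂ᴴ := by
  ext i j
  exact (hM.apply _ _).symm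

lemma Matrix.IsHermitian.fromBlocks_toBlocks (hM : M.IsHermitian) :
    Matrix.fromBlocks M.toBlocks₁₁ M.toBlocks₁₂ M.toBlocks₁₂ᴴ M.toBlocks₂₂ = M := by
  rw [← hM.toBlocks₂₁_eq, Matrix.fromBlocks_toBlocks]

end BlockMatrix

lemma dotProduct_inv_mulVec_of_mulVec_eq {S : Type*} [Fintype S] [DecidableEq S]
    {D : Matrix S S ℝ} (hD : D.PosDef) {y b : S → ℝ} (hy : D *ᵥ y = b) (c : S → ℝ) :
    b ⬝ᵥ D⁻¹ *ᵥ c = y ⬝ᵥ c := by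
  have hinv : D⁻¹ᵀ = D⁻¹ := by
    simpa [conjTranspose_eq_transpose_of_trivial] using hD.1.inv.eq
  rw [dotProduct_mulVec, ← mulVec_transpose, hinv, ← hy, mulVec_mulVec,
    nonsing_inv_mul _ ((isUnit_iff_isUnit_det D).mp hD.isUnit), one_mulVec]

section SchurComplement

variable {C S : Type*} [Fintype C] [Fintype S] [DecidableEq S]

lemma schurElimS_apply (M : Matrix (C ⊕ S) (C ⊕ S) ℝ) (p q : C) :
    schurElimS M p q = M (.inl p) (.inl q) -
      (fun j => M (.inl p) (.inr j)) ⬝ᵥ M.toBlocks₂₂⁻¹ *ᵥ fun j => M (.inr j) (.inl q) := by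
  simp only [schurElimS, Matrix.sub_apply, Matrix.mul_apply, dotProduct, mulVec,
    Finset.sum_mul, Finset.mul_sum, toBlocks₁₁, toBlocks₁₂, toBlocks₂₁, of_apply, mul_assoc]
  rw [Finset.sum_comm]

lemma dotProduct_schurElimS_mulVec_le {M : Matrix (C ⊕ S) (C ⊕ S) ℝ} (hM : M.IsHermitian)
    (hD : M.toBlocks₂₂.PosDef) (x : C → ℝ) (y : S → ℝ) :
    x ⬝ᵥ schurElimS M *ᵥ x ≤ (x ⊕ᵥ y) ⬝ᵥ M *ᵥ (x ⊕ᵥ y) := by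
  let _ := hD.isUnit.invertible
  have key := schur_complement_eq₂₂ M.toBlocks₁₁ M.toBlocks₁₂ x y hD.1
  simp only [star_trivial, ← dotProduct_mulVec, hM.fromBlocks_toBlocks] at key
  rw [key, schurElimS, hM.toBlocks₂₁_eq]
  exact le_add_of_nonneg_left
    (by simpa only [star_trivial] using hD.posSemidef.dotProduct_mulVec_nonneg _)

lemma isHermitian_schurElimS {M : Matrix (C ⊕ S) (C ⊕ S) ℝ} (hM : M.IsHermitian) :
    (schurElimS M).IsHermitian := by
  rw [schurElimS, hM.toBlocks₂₁_eq]
  have hA : M.toBlocks₁₁.IsHermitian := congr_arg toBlocks₁₁ hM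
  have hD : M.toBlocks₂₂.IsHermitian := congr_arg toBlocks₂₂ hM
  exact hA.sub (isHermitian_mul_mul_conjTranspose _ hD.inv)

lemma psdle_schurElimS {M : Matrix (C ⊕ S) (C ⊕ S) ℝ} {L : Matrix C C ℝ}
    (hM : M.IsHermitian) (hD : M.toBlocks₂₂.PosDef) (hL : L.IsHermitian)
    (hext : ∀ x, ∃ y, (x ⊕ᵥ y) ⬝ᵥ M *ᵥ (x ⊕ᵥ y) ≤ x ⬝ᵥ L *ᵥ x) :
    PSDLE (schurElimS M) L := by
  refine .of_dotProduct_mulVec_nonneg (hL.sub (isHermitian_schurElimS hM)) fun x => ?_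
  obtain ⟨y, hy⟩ := hext x
  have := dotProduct_schurElimS_mulVec_le hM hD x y
  rw [star_trivial, sub_mulVec, dotProduct_sub]
  linarith

end SchurComplement

section InverseSums

variable {ι : Type*} [Fintype ι] {d : ι → ℝ} {W : ℝ}

lemma mul_sum_inv_le_card_div (hW : 0 < W) {a : ℝ} (ha : 0 < a) (hd : ∀ j, a * W ≤ d j) :
    W * ∑ j, (d j)⁻¹ ≤ Fintype.card ι / a := by
  rw [Finset.mul_sum, div_eq_mul_inv, ← nsmul_eq_mul, ← Finset.card_univ, ← Finset.sum_const]
  refine Finset.sum_le_sum fun j _ => ?_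
  calc W * (d j)⁻¹ ≤ W * (a * W)⁻¹ := by gcongr; exact hd j
    _ = a⁻¹ := by field_simp

lemma card_div_le_mul_sum_inv (hW : 0 < W) {b : ℝ} (hd : ∀ j, 0 < d j)
    (hdb : ∀ j, d j ≤ b * W) : Fintype.card ι / b ≤ W * ∑ j, (d j)⁻¹ := by
  rw [Finset.mul_sum, div_eq_mul_inv, ← nsmul_eq_mul, ← Finset.card_univ, ← Finset.sum_const]
  refine Finset.sum_le_sum fun j _ => ?_
  calc b⁻¹ = W * (b * W)⁻¹ := by rw [mul_inv, mul_left_comm, mul_inv_cancel₀ hW.ne', mul_one]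
    _ ≤ W * (d j)⁻¹ := by gcongr; exacts [hd j, hdb j]

lemma one_sub_mul_sum_inv_pos (hW : 0 < W) (hd : ∀ j, (Fintype.card ι + 1) * W ≤ d j) :
    0 < 1 - W * ∑ j, (d j)⁻¹ := by
  have hle := mul_sum_inv_le_card_div hW (by positivity) hd
  have hlt : (Fintype.card ι : ℝ) / (Fintype.card ι + 1) < 1 := by
    rw [div_lt_one (by positivity)]; linarith
  linarith

lemma inv_one_add_le_div_one_sub_mul_sum_inv (hW : 0 < W) {δ : ℝ} (hδ : 0 ≤ δ)
    (hlo : ∀ j, (Fintype.card ι + 1) * W ≤ d j)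
    (hhi : ∀ j, d j ≤ (Fintype.card ι + 1 + δ) * W) (j : ι) :
    (1 + δ)⁻¹ ≤ W / ((1 - W * ∑ l, (d l)⁻¹) * d j) := by
  set m : ℝ := (Fintype.card ι : ℝ)
  have hm : 0 < m + 1 + δ := by positivity
  have hd : ∀ l, 0 < d l := fun l => lt_of_lt_of_le (by positivity) (hlo l)
  have hc := one_sub_mul_sum_inv_pos hW hlo
  have hc_le : 1 - W * ∑ l, (d l)⁻¹ ≤ (1 + δ) / (m + 1 + δ) := by
    have hge := card_div_le_mul_sum_inv hW hd hhi
    have hm' : 1 - m / (m + 1 + δ) = (1 + δ) / (m + 1 + δ) := by field_simp; ring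
    linarith
  calc (1 + δ)⁻¹ = W / ((1 + δ) / (m + 1 + δ) * ((m + 1 + δ) * W)) := by field_simp
    _ ≤ W / ((1 - W * ∑ l, (d l)⁻¹) * d j) := by
        gcongr
        · exact mul_pos hc (hd j)
        · exact (hd j).le
        · exact hhi j

lemma one_sub_two_mul_le_inv_one_add {δ : ℝ} (hδ : 0 ≤ δ) : 1 - 2 * δ ≤ (1 + δ)⁻¹ := by
  rw [← one_div, le_div_iff₀ (by linarith)]
  nlinarith

end InverseSums

section DiagonalSubConst

variable {ι : Type*} [Fintype ι] [DecidableEq ι] (d : ι → ℝ) (W : ℝ)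

lemma diagonal_sub_const_mulVec (v : ι → ℝ) :
    (diagonal d - of fun _ _ => W) *ᵥ v = fun j => d j * v j - W * ∑ l, v l := by
  ext j
  rw [sub_mulVec, Pi.sub_apply, mulVec_diagonal]
  simp [mulVec, dotProduct, Finset.mul_sum]

lemma posDef_diagonal_sub_const (hW : 0 ≤ W) (hd : ∀ j, Fintype.card ι * W < d j) :
    (diagonal d - of fun _ _ => W).PosDef := by
  refine .of_dotProduct_mulVec_pos ((isHermitian_diagonal d).sub (by ext; simp)) fun v hv => ?_
  have hcs : (∑ j, v j) ^ 2 ≤ Fintype.card ι * ∑ j, v j ^ 2 := by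
    simpa using sq_sum_le_card_mul_sum_sq (s := Finset.univ) (f := v)
  obtain ⟨j₀, hj₀⟩ := Function.ne_iff.mp hv
  calc 0 < ∑ j, (d j - Fintype.card ι * W) * v j ^ 2 :=
        Finset.sum_pos' (fun j _ => mul_nonneg (sub_nonneg.mpr (hd j).le) (sq_nonneg _))
          ⟨j₀, Finset.mem_univ _, mul_pos (sub_pos.mpr (hd j₀)) (pow_two_pos_of_ne_zero hj₀)⟩
    _ = ∑ j, d j * v j ^ 2 - W * (Fintype.card ι * ∑ j, v j ^ 2) := by
        simp only [sub_mul, Finset.sum_sub_distrib, Finset.mul_sum]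
        ring_nf
    _ ≤ ∑ j, d j * v j ^ 2 - W * (∑ j, v j) ^ 2 := by gcongr
    _ = star v ⬝ᵥ (diagonal d - of fun _ _ => W) *ᵥ v := by
        simp only [star_trivial, diagonal_sub_const_mulVec, dotProduct, mul_sub,
          Finset.sum_sub_distrib, ← Finset.sum_mul]
        congr 1
        · exact Finset.sum_congr rfl fun _ _ => by ring
        · ring

lemma diagonal_sub_const_mulVec_eq_const (hd : ∀ j, d j ≠ 0)
    (hc : 1 - W * ∑ l, (d l)⁻¹ ≠ 0) :
    (diagonal d - of fun _ _ => W) *ᵥ (fun j => W / ((1 - W * ∑ l, (d l)⁻¹) * d j)) =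
      fun _ => W := by
  set S := ∑ l, (d l)⁻¹ with hS
  set c := 1 - W * S with hc_def
  have hsum : ∑ l, W / (c * d l) = W / c * S := by
    rw [hS, Finset.mul_sum]
    exact Finset.sum_congr rfl fun l _ => by field_simp
  ext j
  have hj : d j * (W / (c * d j)) = W / c := by field_simp [hd j]
  simp only [diagonal_sub_const_mulVec, hsum, hj]
  field_simp
  linear_combination W * hc_def

end DiagonalSubConst

section SplitStar

variable {n k : ℕ}

def uCopy : Unit ⊕ Fin k → (Fin n ⊕ Unit) ⊕ Fin k :=
  Sum.elim (fun _ => Sum.inl (Sum.inr ())) Sum.inr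

lemma uCopy_injective : Function.Injective (uCopy (n := n) (k := k)) := by
  rintro (_ | _) (_ | _) h <;> simp_all [uCopy]

lemma leaf_ne_uCopy (i : Fin n) (a : Unit ⊕ Fin k) : Sum.inl (Sum.inl i) ≠ uCopy a := by
  rcases a with _ | _ <;> simp [uCopy]

def starLaplacian (w : Fin n → ℝ) : Matrix (Fin n ⊕ Unit) (Fin n ⊕ Unit) ℝ :=
  ∑ i, w i • edgeL (Sum.inl i) (Sum.inr ())

def splitLaplacian (w : Fin n → ℝ) (W : ℝ) (σ : Fin n → Unit ⊕ Fin k) :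
    Matrix ((Fin n ⊕ Unit) ⊕ Fin k) ((Fin n ⊕ Unit) ⊕ Fin k) ℝ :=
  (W / 2) • (∑ a, ∑ b, edgeL (uCopy a) (uCopy b)) +
    ∑ i, w i • edgeL (Sum.inl (Sum.inl i)) (uCopy (σ i))

def copyLoad (w : Fin n → ℝ) (σ : Fin n → Unit ⊕ Fin k) (a : Unit ⊕ Fin k) : ℝ :=
  ∑ i, if σ i = a then w i else 0

def copyDegree (w : Fin n → ℝ) (W : ℝ) (σ : Fin n → Unit ⊕ Fin k) (j : Fin k) : ℝ :=
  (k + 1) * W + copyLoad w σ (.inr j)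

variable (w : Fin n → ℝ) (W : ℝ) (σ : Fin n → Unit ⊕ Fin k)

lemma card_add_one_mul_le_copyDegree (hw : ∀ i, 0 ≤ w i) (j : Fin k) :
    (Fintype.card (Fin k) + 1) * W ≤ copyDegree w W σ j := by
  have : 0 ≤ copyLoad w σ (.inr j) :=
    Finset.sum_nonneg fun i _ => by split_ifs; exacts [hw i, le_rfl]
  simpa [copyDegree] using this

lemma copyDegree_le (hw : ∀ i, 0 ≤ w i) {δ : ℝ} (hsum : ∑ i, w i ≤ δ * W) (j : Fin k) :
    copyDegree w W σ j ≤ (Fintype.card (Fin k) + 1 + δ) * W := by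
  have : copyLoad w σ (.inr j) ≤ ∑ i, w i :=
    Finset.sum_le_sum fun i _ => by split_ifs; exacts [le_rfl, hw i]
  simp only [copyDegree, Fintype.card_fin]
  linarith

lemma starLaplacian_isHermitian : (starLaplacian w).IsHermitian :=
  isSelfAdjoint_sum _ fun i _ => (edgeL_isHermitian _ _).smul (IsSelfAdjoint.all (w i))

lemma splitLaplacian_isHermitian : (splitLaplacian w W σ).IsHermitian := by
  refine .add (.smul (isSelfAdjoint_sum _ fun a _ => isSelfAdjoint_sum _ fun b _ =>
    edgeL_isHermitian _ _) (IsSelfAdjoint.all _)) ?_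
  exact isSelfAdjoint_sum _ fun i _ => (edgeL_isHermitian _ _).smul (IsSelfAdjoint.all (w i))

lemma splitLaplacian_apply_uCopy_uCopy (a b : Unit ⊕ Fin k) :
    splitLaplacian w W σ (uCopy a) (uCopy b) =
      (if a = b then (k + 1) * W + copyLoad w σ a else 0) - W := by
  simp only [splitLaplacian, Matrix.add_apply, Matrix.smul_apply, smul_eq_mul,
    sum_sum_edgeL_apply uCopy_injective, Matrix.sum_apply, edgeL_apply, eVec_apply,
    uCopy_injective.eq_iff, (leaf_ne_uCopy _ _).symm, if_false, zero_sub]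
  have hload : ∑ x, w x * ((-if a = σ x then (1 : ℝ) else 0) * -if b = σ x then 1 else 0) =
      if a = b then copyLoad w σ a else 0 := by
    unfold copyLoad
    split_ifs with hab
    · subst hab
      exact Finset.sum_congr rfl fun x _ => by split_ifs <;> simp_all
    · exact Finset.sum_eq_zero fun x _ => by split_ifs <;> simp_all
  rw [hload]
  split_ifs
  · simp only [Fintype.card_sum, Fintype.card_unit, Fintype.card_fin]
    push_cast
    ring
  · ring

lemma splitLaplacian_apply_uCopy_leaf (a : Unit ⊕ Fin k) (i : Fin n) :
    splitLaplacian w W σ (uCopy a) (Sum.inl (Sum.inl i)) = -(if σ i = a then w i else 0) := by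
  have hq : Sum.inl (Sum.inl i) ∉ Set.range (uCopy (n := n) (k := k)) := by
    rintro ⟨b, hb⟩; exact leaf_ne_uCopy i b hb.symm
  simp only [splitLaplacian, Matrix.add_apply, Matrix.smul_apply, smul_eq_mul,
    sum_sum_edgeL_apply_of_notMem_range _ hq, Matrix.sum_apply, edgeL_apply, eVec_apply,
    (leaf_ne_uCopy _ _).symm, leaf_ne_uCopy, if_false, zero_sub]
  simp [uCopy_injective.eq_iff, eq_comm (a := a)]

lemma splitLaplacian_toBlocks₂₂ :
    (splitLaplacian w W σ).toBlocks₂₂ = diagonal (copyDegree w W σ) - of fun _ _ => W := by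
  ext j l
  refine (splitLaplacian_apply_uCopy_uCopy w W σ (.inr j) (.inr l)).trans ?_
  by_cases h : j = l <;> simp [h, copyDegree]

lemma dotProduct_splitLaplacian_mulVec_extend (x : Fin n ⊕ Unit → ℝ) :
    (x ⊕ᵥ fun _ => x (.inr ())) ⬝ᵥ splitLaplacian w W σ *ᵥ (x ⊕ᵥ fun _ => x (.inr ())) =
      x ⬝ᵥ starLaplacian w *ᵥ x := by
  have hX : ∀ a, (x ⊕ᵥ fun _ : Fin k => x (.inr ())) (uCopy a) = x (.inr ()) := by
    rintro (_ | _) <;> rfl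
  simp only [splitLaplacian, starLaplacian, add_mulVec, smul_mulVec, sum_mulVec, dotProduct_add,
    dotProduct_sum, dotProduct_smul, dotProduct_edgeL_mulVec, hX, sub_self]
  simp

lemma schurElimS_splitLaplacian_apply {y : Fin k → ℝ}
    (hD : (splitLaplacian w W σ).toBlocks₂₂.PosDef)
    (hy : (splitLaplacian w W σ).toBlocks₂₂ *ᵥ y = fun _ => W) (i : Fin n) :
    schurElimS (splitLaplacian w W σ) (.inr ()) (.inl i) =
      -(w i * Sum.elim (fun _ => 1) y (σ i)) := by
  have hrow : (fun j => splitLaplacian w W σ (.inl (.inr ())) (.inr j)) = -fun _ => W := by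
    ext j
    exact (splitLaplacian_apply_uCopy_uCopy w W σ (.inl ()) (.inr j)).trans (by simp)
  have hcol : (fun j => splitLaplacian w W σ (.inr j) (.inl (.inl i))) =
      fun j => -(if σ i = .inr j then w i else 0) :=
    funext fun j => splitLaplacian_apply_uCopy_leaf w W σ (.inr j) i
  have hu : splitLaplacian w W σ (.inl (.inr ())) (.inl (.inl i)) =
      -(if σ i = .inl () then w i else 0) :=
    splitLaplacian_apply_uCopy_leaf w W σ (.inl ()) i
  rw [schurElimS_apply, hrow, hcol, hu, neg_dotProduct, dotProduct_inv_mulVec_of_mulVec_eq hD hy]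
  rcases σ i with _ | j
  · simp
  · simp [dotProduct, mul_comm]

end SplitStar

theorem split_star_schur_general (n k : ℕ) (hn : 1 ≤ n)
    (w : Fin n → ℝ) (hw : ∀ i, 0 < w i) (δ : ℝ) (hδ : 0 < δ)
    (σ : Fin n → Unit ⊕ Fin k) :
    -- the map sending each copy of `u` to its vertex in `Ĝ`
    let uOf : Unit ⊕ Fin k → (Fin n ⊕ Unit) ⊕ Fin k :=
      Sum.elim (fun _ => Sum.inl (Sum.inr ())) Sum.inr
    let W : ℝ := δ⁻¹ * ∑ i, w i
    let LG : Matrix (Fin n ⊕ Unit) (Fin n ⊕ Unit) ℝ :=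
      ∑ i, w i • edgeL (Sum.inl i) (Sum.inr ())
    let LGhat : Matrix ((Fin n ⊕ Unit) ⊕ Fin k) ((Fin n ⊕ Unit) ⊕ Fin k) ℝ :=
      (W / 2) • (∑ a : Unit ⊕ Fin k, ∑ b : Unit ⊕ Fin k, edgeL (uOf a) (uOf b)) +
        ∑ i, w i • edgeL (Sum.inl (Sum.inl i)) (uOf (σ i))
    PSDLE (schurElimS LGhat) LG ∧
      ∀ i : Fin n, schurElimS LGhat (Sum.inr ()) (Sum.inl i) ≤ -(w i * (1 - 2 * δ)) := by
  intro _ W _ _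
  show PSDLE (schurElimS (splitLaplacian w W σ)) (starLaplacian w) ∧
    ∀ i, schurElimS (splitLaplacian w W σ) (.inr ()) (.inl i) ≤ -(w i * (1 - 2 * δ))
  have hw' : ∀ i, 0 ≤ w i := fun i => (hw i).le
  have hW : 0 < W := mul_pos (inv_pos.2 hδ) (Finset.sum_pos (fun i _ => hw i) ⟨⟨0, hn⟩, by simp⟩)
  have hlo := card_add_one_mul_le_copyDegree w W σ hw'
  have hhi := copyDegree_le w W σ hw' (δ := δ)
    (by simp only [W]; rw [mul_inv_cancel_left₀ hδ.ne'])
  have hD := splitLaplacian_toBlocks₂₂ w W σ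
  have hDpos : (splitLaplacian w W σ).toBlocks₂₂.PosDef :=
    hD ▸ posDef_diagonal_sub_const _ W hW.le fun j => by linarith [hlo j]
  have hy := diagonal_sub_const_mulVec_eq_const _ W
    (fun j => (lt_of_lt_of_le (by positivity) (hlo j)).ne') (one_sub_mul_sum_inv_pos hW hlo).ne'
  refine ⟨psdle_schurElimS (splitLaplacian_isHermitian w W σ) hDpos (starLaplacian_isHermitian w)
    fun x => ⟨_, (dotProduct_splitLaplacian_mulVec_extend w W σ x).le⟩, fun i => ?_⟩
  rw [schurElimS_splitLaplacian_apply w W σ hDpos (hD ▸ hy) i, neg_le_neg_iff]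
  refine mul_le_mul_of_nonneg_left ?_ (hw' i)
  rcases σ i with _ | j
  · simp only [Sum.elim_inl]
    linarith
  · exact (one_sub_two_mul_le_inv_one_add hδ.le).trans
      (inv_one_add_le_div_one_sub_mul_sum_inv hW hδ.le hlo hhi j)

/-- vertex splitting: `G` is the weighted star on `{v_1,…,v_n, u}`
(vertex set `Fin n ⊕ Unit`, with `u = Sum.inr ()`).  `Ĝ` lives on
`(Fin n ⊕ Unit) ⊕ Fin k`: the `u`-vertices are `u_1 = Sum.inl (Sum.inr ())`
together with the `k ≥ 1` extra vertices `Sum.inr j` (so there are `k + 1 ≥ 2`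
copies of `u` in total).  The copies of `u` are joined by a complete graph with
edge weight `W = δ⁻¹·Σ_i w_i`, and each `v_i` is attached to the copy `σ i` by
an edge of weight `w_i`.  Eliminating the extra copies `U = Fin k`,
`Schur(L_Ĝ, U) ⪯ L_G`, and each off-diagonal entry `(u_1, v_i)` of the Schur
complement is at most `−w_i·(1−2δ)`. -/
theorem split_star_schur (n k : ℕ) (hn : 1 ≤ n) (hk : 1 ≤ k)
    (w : Fin n → ℝ) (hw : ∀ i, 0 < w i) (δ : ℝ) (hδ : 0 < δ)
    (σ : Fin n → Unit ⊕ Fin k) :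
    -- the map sending each copy of `u` to its vertex in `Ĝ`
    let uOf : Unit ⊕ Fin k → (Fin n ⊕ Unit) ⊕ Fin k :=
      Sum.elim (fun _ => Sum.inl (Sum.inr ())) Sum.inr
    let W : ℝ := δ⁻¹ * ∑ i, w i
    let LG : Matrix (Fin n ⊕ Unit) (Fin n ⊕ Unit) ℝ :=
      ∑ i, w i • edgeL (Sum.inl i) (Sum.inr ())
    let LGhat : Matrix ((Fin n ⊕ Unit) ⊕ Fin k) ((Fin n ⊕ Unit) ⊕ Fin k) ℝ :=
      (W / 2) • (∑ a : Unit ⊕ Fin k, ∑ b : Unit ⊕ Fin k, edgeL (uOf a) (uOf b)) +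
        ∑ i, w i • edgeL (Sum.inl (Sum.inl i)) (uOf (σ i))
    PSDLE (schurElimS LGhat) LG ∧
      ∀ i : Fin n, schurElimS LGhat (Sum.inr ()) (Sum.inl i) ≤ -(w i * (1 - 2 * δ)) :=
  split_star_schur_general n k hn w hw δ hδ σ
end
end

section
/- Let M be an SDDM matrix with indices partitioned into blocks F and C, and write M_{FF} = D_{FF} − A_{FF} where D_{FF} is diagonal and A_{FF} is a nonnegative symmetric matrix with zero diagonal. Define M₁ = [[D_{FF}, M_{FC}],[M_{CF}, diag(M_{CF}·D_{FF}^{−1}·M_{FC}·1_C)]] and M₂ = [[D_{FF} − A_{FF}·D_{FF}^{−1}·A_{FF}, (I + A_{FF}·D_{FF}^{−1})·M_{FC}],[M_{CF}·(I + D_{FF}^{−1}·A_{FF}), 2·M_{CC} − diag(M_{CF}·D_{FF}^{−1}·M_{FC}·1_C)]], where diag(x) is the diagonal matrix with diagonal given by the vector x and 1_C is the all-ones vector on C. Then Schur(M₁, F) is a Laplacian matrix, M₂ is an SDDM matrix, and Schur(M, F) = ½·( Schur(M₁, F) + Schur(M₂, F) ). -/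
/-!
Write `M = [[D - A, B], [Bᵀ, E]]`. Everything is driven by the factorisation
`D - A D⁻¹ A = (1 + A D⁻¹) (D - A)`, which collapses the middle factor of `Schur(M₂, F)`:
`(1 + D⁻¹ A) (D - A D⁻¹ A)⁻¹ (1 + A D⁻¹) = 2 (D - A)⁻¹ - D⁻¹`, hence
`Schur(M₂, F) = 2 Schur(M, F) - Schur(M₁, F)`, the splitting identity.
`Schur(M₁, F) = diag(K 1) - K` with `K = Bᵀ D⁻¹ B ≥ 0`, a Laplacian.

`M₂` is a Z-matrix whose row sums are `(1 + A D⁻¹) r` and `2 s - Bᵀ D⁻¹ r`, where `r, s ≥ 0` are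
the row sums of `M`; so it is diagonally dominant. By the Schur complement criterion it is positive
definite once `D - A D⁻¹ A` is (a sum of congruences of `D ± A`) and
`Schur(M₂, F) = Schur(M, F) + (Schur(M, F) - Schur(M₁, F))` is. The last summand is a symmetric
Z-matrix with nonnegative row sums, hence positive semidefinite by Gershgorin; its signs come from
`(D - A)⁻¹ ≥ 0` entrywise, as `D - A` is a positive definite Z-matrix.
-/

open Matrix BigOperators Finset
open scoped Classical

noncomputable section

def EntrywiseNonneg {m n : Type*} (X : Matrix m n ℝ) : Prop := ∀ i j, 0 ≤ X i j

def IsZMatrix {n : Type*} (X : Matrix n n ℝ) : Prop := ∀ i j, i ≠ j → X i j ≤ 0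

section EntrywiseNonneg

variable {l m n : Type*} {X Y : Matrix l m ℝ}

theorem EntrywiseNonneg.add (hX : EntrywiseNonneg X) (hY : EntrywiseNonneg Y) :
    EntrywiseNonneg (X + Y) :=
  fun i j => add_nonneg (hX i j) (hY i j)

theorem EntrywiseNonneg.transpose (hX : EntrywiseNonneg X) : EntrywiseNonneg Xᵀ :=
  fun i j => hX j i

theorem EntrywiseNonneg.mul [Fintype m] {Y : Matrix m n ℝ} (hX : EntrywiseNonneg X)
    (hY : EntrywiseNonneg Y) : EntrywiseNonneg (X * Y) :=
  fun i k => sum_nonneg fun j _ => mul_nonneg (hX i j) (hY j k)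

theorem EntrywiseNonneg.mulVec_nonneg [Fintype m] (hX : EntrywiseNonneg X) {u : m → ℝ}
    (hu : 0 ≤ u) : 0 ≤ X *ᵥ u :=
  fun i => dotProduct_nonneg_of_nonneg (hX i) hu

theorem entrywiseNonneg_one [DecidableEq m] : EntrywiseNonneg (1 : Matrix m m ℝ) :=
  fun i j => by rw [one_apply]; split_ifs <;> norm_num

end EntrywiseNonneg

theorem isZMatrix_fromBlocks_iff {m n : Type*} {P : Matrix m m ℝ} {Q : Matrix m n ℝ}
    {R : Matrix n m ℝ} {T : Matrix n n ℝ} :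
    IsZMatrix (fromBlocks P Q R T) ↔
      IsZMatrix P ∧ EntrywiseNonneg (-Q) ∧ EntrywiseNonneg (-R) ∧ IsZMatrix T := by
  simp only [IsZMatrix, EntrywiseNonneg, Sum.forall, ne_eq, reduceCtorEq, not_false_eq_true,
    fromBlocks_apply₁₁, fromBlocks_apply₁₂, fromBlocks_apply₂₁, fromBlocks_apply₂₂,
    Sum.inl.injEq, Sum.inr.injEq, Matrix.neg_apply, neg_nonneg, forall_const, forall_and]
  tauto

section ZMatrix

variable {n : Type*} [Fintype n]

theorem IsZMatrix.sum_erase_abs_le_iff [DecidableEq n] {N : Matrix n n ℝ} (hN : IsZMatrix N)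
    (i : n) : ∑ j ∈ univ.erase i, |N i j| ≤ N i i ↔ 0 ≤ (N *ᵥ 1) i := by
  have habs : ∑ j ∈ univ.erase i, |N i j| = -∑ j ∈ univ.erase i, N i j := by
    rw [← sum_neg_distrib]
    exact sum_congr rfl fun j hj => abs_of_nonpos (hN i j (ne_of_mem_erase hj).symm)
  rw [habs, mulVec, dotProduct, ← add_sum_erase _ _ (mem_univ i)]
  simp only [Pi.one_apply, mul_one]
  constructor <;> intro h <;> linarith

theorem isSDDM_iff [DecidableEq n] {N : Matrix n n ℝ} :
    IsSDDM N ↔ N.IsSymm ∧ N.PosDef ∧ IsZMatrix N ∧ 0 ≤ N *ᵥ 1 :=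
  ⟨fun ⟨hs, hpd, hZ, hdom⟩ =>
      ⟨hs, hpd, hZ, fun i => (IsZMatrix.sum_erase_abs_le_iff hZ i).1 (hdom i)⟩,
    fun ⟨hs, hpd, hZ, hrow⟩ =>
      ⟨hs, hpd, hZ, fun i => (IsZMatrix.sum_erase_abs_le_iff hZ i).2 (hrow i)⟩⟩

theorem posSemidef_of_sum_abs_le_diag [DecidableEq n] {N : Matrix n n ℝ} (hN : N.IsHermitian)
    (hdom : ∀ i, ∑ j ∈ univ.erase i, |N i j| ≤ N i i) : N.PosSemidef := by
  refine hN.posSemidef_iff_eigenvalues_nonneg.2 fun i => ?_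
  have hμ : Module.End.HasEigenvalue (toLin' N) (hN.eigenvalues i) :=
    Module.End.hasEigenvalue_iff_mem_spectrum.2
      ((spectrum_toLin' N).symm ▸ hN.eigenvalues_mem_spectrum_real i)
  obtain ⟨k, hk⟩ := eigenvalue_mem_ball hμ
  rw [Metric.mem_closedBall, Real.dist_eq] at hk
  simp only [Real.norm_eq_abs] at hk
  rw [Pi.zero_apply]
  linarith [(abs_le.1 hk).1, hdom k]

theorem IsZMatrix.posSemidef [DecidableEq n] {N : Matrix n n ℝ} (hZ : IsZMatrix N)
    (hN : N.IsSymm) (hrow : 0 ≤ N *ᵥ 1) : N.PosSemidef :=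
  posSemidef_of_sum_abs_le_diag (isHermitian_iff_isSymm.2 hN)
    fun i => (hZ.sum_erase_abs_le_iff i).2 (hrow i)

/-- Test the form of `X` against the negative part `z` of `y`: its cross terms with the positive
part `w` are nonnegative, so `z ⬝ X z ≤ z ⬝ X y ≤ 0`. -/
theorem IsZMatrix.nonneg_of_mulVec_nonneg {X : Matrix n n ℝ} (hZ : IsZMatrix X)
    (hX : X.PosDef) {y : n → ℝ} (hy : 0 ≤ X *ᵥ y) : 0 ≤ y := by
  set z : n → ℝ := fun i => min (y i) 0
  set w : n → ℝ := fun i => max (y i) 0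
  have hyzw : y = z + w := funext fun i => by simp [z, w, min_add_max]
  have hcross : 0 ≤ z ⬝ᵥ X *ᵥ w := by
    simp only [dotProduct, mulVec, mul_sum]
    refine sum_nonneg fun i _ => sum_nonneg fun j _ => ?_
    rcases eq_or_ne i j with rfl | hij
    · have : z i * w i = 0 := by rcases le_total (y i) 0 with h | h <;> simp [z, w, h]
      rw [mul_left_comm, this, mul_zero]
    · exact mul_nonneg_of_nonpos_of_nonpos (min_le_right _ _)
        (mul_nonpos_of_nonpos_of_nonneg (hZ i j hij) (le_max_right _ _))
  have hzy : z ⬝ᵥ X *ᵥ y ≤ 0 :=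
    sum_nonpos fun i _ => mul_nonpos_of_nonpos_of_nonneg (min_le_right _ _) (hy i)
  have hz : z = 0 := by
    by_contra hz
    have hpos := hX.dotProduct_mulVec_pos hz
    rw [star_trivial] at hpos
    rw [hyzw, mulVec_add, dotProduct_add] at hzy
    linarith
  intro i
  simpa [z] using congrFun hz i

theorem IsZMatrix.entrywiseNonneg_inv [DecidableEq n] {X : Matrix n n ℝ} (hZ : IsZMatrix X)
    (hX : X.PosDef) : EntrywiseNonneg X⁻¹ := by
  intro i j
  have hXinv : X *ᵥ (X⁻¹ *ᵥ Pi.single j 1) = Pi.single j 1 := by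
    rw [mulVec_mulVec, mul_nonsing_inv _ hX.det_pos.ne'.isUnit, one_mulVec]
  have := hZ.nonneg_of_mulVec_nonneg hX (hXinv ▸ Pi.single_nonneg.2 zero_le_one) i
  simpa [mulVec_single_one] using this

end ZMatrix

section PosDef

variable {m n : Type*}

theorem posDef_fromBlocks₁₁_iff [Fintype m] [Fintype n] [DecidableEq m] [DecidableEq n]
    {P : Matrix m m ℝ} (Q : Matrix m n ℝ) (T : Matrix n n ℝ) (hP : P.PosDef) :
    (fromBlocks P Q Qᴴ T).PosDef ↔ (T - Qᴴ * P⁻¹ * Q).PosDef := by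
  let := hP.isUnit.invertible
  have hdet : (fromBlocks P Q Qᴴ T).det = P.det * (T - Qᴴ * P⁻¹ * Q).det := by
    rw [det_fromBlocks₁₁, invOf_eq_nonsing_inv]
  have hpsd := PosDef.fromBlocks₁₁ Q T hP
  constructor
  · intro h
    refine ((hpsd.1 h.posSemidef).posDef_iff_det_ne_zero).2 fun h0 => ?_
    exact h.det_pos.ne' (by rw [hdet, h0, mul_zero])
  · intro h
    refine ((hpsd.2 h.posSemidef).posDef_iff_det_ne_zero).2 ?_
    rw [hdet]
    exact mul_ne_zero hP.det_pos.ne' h.det_pos.ne'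

theorem Matrix.IsDiag.posDef_of_posDef_sub [DecidableEq m] {D A : Matrix m m ℝ} (hD : D.IsDiag)
    (hA : EntrywiseNonneg A) (h : (D - A).PosDef) : D.PosDef := by
  rw [← (isDiag_iff_diagonal_diag D).1 hD, posDef_diagonal_iff]
  intro i
  have := h.diag_pos (i := i)
  rw [Matrix.sub_apply] at this
  exact this.trans_le (sub_le_self _ (hA i i))

/-- The form of `D + A` at `x` dominates the form of `D - A` at `|x|`. -/
theorem Matrix.IsDiag.posDef_add_of_posDef_sub [Fintype m] {D A : Matrix m m ℝ} (hD : D.IsDiag)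
    (hA : A.IsSymm) (hA0 : EntrywiseNonneg A) (h : (D - A).PosDef) : (D + A).PosDef := by
  refine .of_dotProduct_mulVec_pos (isHermitian_iff_isSymm.2 (hD.isSymm.add hA)) fun x hx => ?_
  have habs : (fun i => |x i|) ≠ 0 := fun h0 => hx (funext fun i => abs_eq_zero.1 (congrFun h0 i))
  have hpos := h.dotProduct_mulVec_pos habs
  rw [star_trivial] at hpos ⊢
  refine hpos.trans_le ?_
  simp only [dotProduct, mulVec, mul_sum, Matrix.sub_apply, Matrix.add_apply]
  refine sum_le_sum fun i _ => sum_le_sum fun j _ => ?_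
  rcases eq_or_ne i j with rfl | hij
  · have hsq : |x i| * ((D i i - A i i) * |x i|) = (D i i - A i i) * (x i * x i) := by
      rw [← abs_mul_abs_self (x i)]; ring
    nlinarith [mul_nonneg (hA0 i i) (mul_self_nonneg (x i))]
  · rw [hD hij]
    nlinarith [neg_abs_le (x i * x j), abs_mul (x i) (x j), hA0 i j]

/-- `2 (D - A D⁻¹ A) = (1 - D⁻¹ A)ᴴ (D + A) (1 - D⁻¹ A) + (1 + D⁻¹ A)ᴴ (D - A) (1 + D⁻¹ A)`. -/
theorem Matrix.PosDef.sub_mul_inv_mul [Fintype m] [DecidableEq m] {D A : Matrix m m ℝ}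
    (hD : D.PosDef) (hA : A.IsSymm) (hsub : (D - A).PosDef) (hadd : (D + A).PosDef) :
    (D - A * D⁻¹ * A).PosDef := by
  have hDD : D⁻¹ * D = 1 := nonsing_inv_mul D hD.det_pos.ne'.isUnit
  have hPH : (D⁻¹ * A)ᴴ = A * D⁻¹ := by
    rw [conjTranspose_mul, conjTranspose_nonsing_inv, hD.isHermitian.eq,
      (isHermitian_iff_isSymm.2 hA).eq]
  have hminus : (1 - A * D⁻¹) * (D + A) = D - A * D⁻¹ * A := by
    simp only [sub_mul, mul_add, one_mul, Matrix.mul_assoc, hDD, Matrix.mul_one]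
    abel
  have hplus : (1 + A * D⁻¹) * (D - A) = D - A * D⁻¹ * A := by
    simp only [add_mul, mul_sub, one_mul, Matrix.mul_assoc, hDD, Matrix.mul_one]
    abel
  have hsum : (1 - D⁻¹ * A)ᴴ * (D + A) * (1 - D⁻¹ * A) + (1 + D⁻¹ * A)ᴴ * (D - A) * (1 + D⁻¹ * A)
      = (D - A * D⁻¹ * A) + (D - A * D⁻¹ * A) := by
    rw [conjTranspose_sub, conjTranspose_add, conjTranspose_one, hPH, hminus, hplus]
    noncomm_ring
  have hunit : IsUnit (1 + D⁻¹ * A) := by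
    rw [show 1 + D⁻¹ * A = D⁻¹ * (D + A) by rw [mul_add, hDD]]
    exact hD.inv.isUnit.mul hadd.isUnit
  have htwice : ((2 : ℝ) • (D - A * D⁻¹ * A)).PosDef := by
    rw [two_smul, ← hsum, add_comm]
    exact (hsub.conjTranspose_mul_mul_same (mulVec_injective_of_isUnit hunit)).add_posSemidef
      (hadd.posSemidef.conjTranspose_mul_mul_same _)
  simpa using htwice.smul (a := (1 / 2 : ℝ)) (by norm_num)

end PosDef

theorem Matrix.IsSymm.transpose_mul_mul {m n : Type*} [Fintype m] {X : Matrix m m ℝ}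
    (hX : X.IsSymm) (Q : Matrix m n ℝ) : (Qᵀ * X * Q).IsSymm := by
  simp [IsSymm, transpose_mul, hX.eq, Matrix.mul_assoc]

theorem diagonal_mulVec_one {n : Type*} [Fintype n] [DecidableEq n] (v : n → ℝ) :
    diagonal v *ᵥ 1 = v := by
  ext i; simp [mulVec_diagonal]

theorem isLaplacian_diagonal_mulVec_one_sub {n : Type*} [Fintype n] [DecidableEq n]
    {K : Matrix n n ℝ} (hK : K.IsSymm) (hK0 : EntrywiseNonneg K) :
    IsLaplacian (diagonal (K *ᵥ 1) - K) := by
  refine ⟨(isSymm_diagonal _).sub hK, fun i j hij => ?_, fun i => ?_⟩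
  · simpa [diagonal_apply_ne _ hij] using hK0 i j
  · simp [Matrix.sub_apply, sum_sub_distrib, diagonal_apply, mulVec, dotProduct]

section Inverse

variable {n α : Type*} [Fintype n] [DecidableEq n] [CommRing α] {D A : Matrix n n α}

theorem sub_mul_inv_mul_eq_one_add_mul_inv_mul (hD : IsUnit D.det) :
    D - A * D⁻¹ * A = (1 + A * D⁻¹) * (D - A) := by
  simp only [add_mul, mul_sub, one_mul, Matrix.mul_assoc, nonsing_inv_mul D hD, Matrix.mul_one]
  abel

theorem one_add_inv_mul_mul_inv_mul_one_add (hD : IsUnit D.det) (hDA : IsUnit (D - A).det)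
    (hZ : IsUnit (D - A * D⁻¹ * A).det) :
    (1 + D⁻¹ * A) * (D - A * D⁻¹ * A)⁻¹ * (1 + A * D⁻¹) = (2 : α) • (D - A)⁻¹ - D⁻¹ := by
  have hright : (D - A * D⁻¹ * A)⁻¹ * (1 + A * D⁻¹) = (D - A)⁻¹ := by
    calc (D - A * D⁻¹ * A)⁻¹ * (1 + A * D⁻¹)
        = (D - A * D⁻¹ * A)⁻¹ * ((1 + A * D⁻¹) * (D - A)) * (D - A)⁻¹ := by
          simp only [Matrix.mul_assoc, mul_nonsing_inv _ hDA, Matrix.mul_one]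
      _ = (D - A)⁻¹ := by
          rw [← sub_mul_inv_mul_eq_one_add_mul_inv_mul hD, nonsing_inv_mul _ hZ, Matrix.one_mul]
  have hleft : D⁻¹ * A * (D - A)⁻¹ = (D - A)⁻¹ - D⁻¹ := by
    calc D⁻¹ * A * (D - A)⁻¹ = D⁻¹ * (D - (D - A)) * (D - A)⁻¹ := by rw [sub_sub_cancel]
      _ = (D - A)⁻¹ - D⁻¹ := by
        rw [Matrix.mul_sub, Matrix.sub_mul, nonsing_inv_mul _ hD, Matrix.one_mul,
          Matrix.mul_assoc, mul_nonsing_inv _ hDA, Matrix.mul_one]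
  rw [Matrix.mul_assoc, hright, add_mul, Matrix.one_mul, hleft, two_smul]
  abel

end Inverse

@[simp]
theorem schurElimF_fromBlocks {F C : Type*} [Fintype F] [Fintype C] [DecidableEq F]
    (P : Matrix F F ℝ) (Q : Matrix F C ℝ) (R : Matrix C F ℝ) (T : Matrix C C ℝ) :
    schurElimF (fromBlocks P Q R T) = T - R * P⁻¹ * Q := by
  simp [schurElimF]

section Splitting

variable {F C : Type*} [Fintype F] [Fintype C] [DecidableEq F] [DecidableEq C]

def splitM₁ (D : Matrix F F ℝ) (B : Matrix F C ℝ) : Matrix (F ⊕ C) (F ⊕ C) ℝ :=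
  fromBlocks D B Bᵀ (diagonal ((Bᵀ * D⁻¹ * B) *ᵥ 1))

def splitM₂ (D A : Matrix F F ℝ) (B : Matrix F C ℝ) (E : Matrix C C ℝ) :
    Matrix (F ⊕ C) (F ⊕ C) ℝ :=
  fromBlocks (D - A * D⁻¹ * A) ((1 + A * D⁻¹) * B) (Bᵀ * (1 + D⁻¹ * A))
    ((2 : ℝ) • E - diagonal ((Bᵀ * D⁻¹ * B) *ᵥ 1))

variable {D A : Matrix F F ℝ} {B : Matrix F C ℝ} {E : Matrix C C ℝ}

theorem schurElimF_splitM₁ :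
    schurElimF (splitM₁ D B) = diagonal ((Bᵀ * D⁻¹ * B) *ᵥ 1) - Bᵀ * D⁻¹ * B := by
  simp [splitM₁]

theorem isLaplacian_schurElimF_splitM₁ (hD : D.IsSymm) (hDinv : EntrywiseNonneg D⁻¹)
    (hB : EntrywiseNonneg (-B)) : IsLaplacian (schurElimF (splitM₁ D B)) := by
  rw [schurElimF_splitM₁]
  refine isLaplacian_diagonal_mulVec_one_sub (hD.inv.transpose_mul_mul B) ?_
  simpa using (hB.transpose.mul hDinv).mul hB

theorem schurElimF_splitM₂ (hD : IsUnit D.det) (hDA : IsUnit (D - A).det)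
    (hZ : IsUnit (D - A * D⁻¹ * A).det) :
    schurElimF (splitM₂ D A B E) =
      (2 : ℝ) • schurElimF (fromBlocks (D - A) B Bᵀ E) - schurElimF (splitM₁ D B) := by
  rw [schurElimF_splitM₁, splitM₂, schurElimF_fromBlocks, schurElimF_fromBlocks]
  calc _ = (2 : ℝ) • E - diagonal ((Bᵀ * D⁻¹ * B) *ᵥ 1)
        - Bᵀ * ((1 + D⁻¹ * A) * (D - A * D⁻¹ * A)⁻¹ * (1 + A * D⁻¹)) * B := by
        simp only [Matrix.mul_assoc]
    _ = _ := by
        rw [one_add_inv_mul_mul_inv_mul_one_add hD hDA hZ, Matrix.mul_sub, Matrix.sub_mul,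
          Matrix.mul_smul, Matrix.smul_mul]
        simp only [Matrix.mul_assoc]
        module

theorem schurElimF_sub_schurElimF_splitM₁_mulVec_one (hDA : IsUnit (D - A).det) :
    (schurElimF (fromBlocks (D - A) B Bᵀ E) - schurElimF (splitM₁ D B)) *ᵥ 1 =
      (Bᵀ *ᵥ 1 + E *ᵥ 1) + (-B)ᵀ *ᵥ ((D - A)⁻¹ *ᵥ ((D - A) *ᵥ 1 + B *ᵥ 1)) := by
  have hr : (D - A)⁻¹ *ᵥ ((D - A) *ᵥ 1 + B *ᵥ 1) = 1 + ((D - A)⁻¹ * B) *ᵥ 1 := by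
    rw [mulVec_add, mulVec_mulVec, nonsing_inv_mul _ hDA, one_mulVec, mulVec_mulVec]
  rw [hr, schurElimF_splitM₁, schurElimF_fromBlocks]
  simp only [sub_mulVec, diagonal_mulVec_one, transpose_neg, Matrix.neg_mul, neg_mulVec,
    mulVec_add, mulVec_mulVec, Matrix.mul_assoc]
  abel

theorem splitM₂_mulVec_one (hD : IsUnit D.det) :
    splitM₂ D A B E *ᵥ 1 =
      Sum.elim ((1 + A * D⁻¹) *ᵥ ((D - A) *ᵥ 1 + B *ᵥ 1))
        ((2 : ℝ) • (Bᵀ *ᵥ 1 + E *ᵥ 1) + (-B)ᵀ *ᵥ (D⁻¹ *ᵥ ((D - A) *ᵥ 1 + B *ᵥ 1))) := by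
  have hr : D⁻¹ *ᵥ ((D - A) *ᵥ 1 + B *ᵥ 1) = 1 - (D⁻¹ * A) *ᵥ 1 + (D⁻¹ * B) *ᵥ 1 := by
    rw [mulVec_add, mulVec_mulVec, Matrix.mul_sub, nonsing_inv_mul _ hD, sub_mulVec, one_mulVec,
      mulVec_mulVec]
  rw [splitM₂, fromBlocks_mulVec, sub_mul_inv_mul_eq_one_add_mul_inv_mul hD, hr,
    show (1 : F ⊕ C → ℝ) ∘ Sum.inl = 1 from rfl, show (1 : F ⊕ C → ℝ) ∘ Sum.inr = 1 from rfl]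
  congr 1
  · rw [mulVec_add, mulVec_mulVec, mulVec_mulVec]
  · simp only [sub_mulVec, diagonal_mulVec_one, transpose_neg, neg_mulVec, mulVec_add,
      mulVec_sub, mulVec_mulVec, Matrix.mul_add, add_mulVec, Matrix.mul_one,
      Matrix.mul_assoc, Matrix.neg_mul, two_smul]
    abel

theorem posSemidef_schurElimF_sub_schurElimF_splitM₁ (hD : D.PosDef)
    (hDinv : EntrywiseNonneg D⁻¹) (hA0 : EntrywiseNonneg A) (hDA : (D - A).PosDef)
    (hDAZ : IsZMatrix (D - A)) (hB : EntrywiseNonneg (-B)) (hE : E.IsSymm) (hEZ : IsZMatrix E)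
    (hr : 0 ≤ (D - A) *ᵥ 1 + B *ᵥ 1) (hs : 0 ≤ Bᵀ *ᵥ 1 + E *ᵥ 1) :
    (schurElimF (fromBlocks (D - A) B Bᵀ E) - schurElimF (splitM₁ D B)).PosSemidef := by
  have hDAinv := hDAZ.entrywiseNonneg_inv hDA
  refine IsZMatrix.posSemidef (fun i j hij => ?_) ?_ ?_
  · have hW : (D - A)⁻¹ - D⁻¹ = (D - A)⁻¹ * A * D⁻¹ := by
      rw [inv_sub_inv (iff_of_true hDA.isUnit hD.isUnit), sub_sub_cancel]
    have hdiff : schurElimF (fromBlocks (D - A) B Bᵀ E) - schurElimF (splitM₁ D B) =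
        E - diagonal ((Bᵀ * D⁻¹ * B) *ᵥ 1) - (-B)ᵀ * ((D - A)⁻¹ * A * D⁻¹) * (-B) := by
      rw [← hW, schurElimF_splitM₁, schurElimF_fromBlocks]
      simp only [transpose_neg, Matrix.neg_mul, Matrix.mul_neg, Matrix.mul_sub, Matrix.sub_mul]
      abel
    have hpos := (hB.transpose.mul ((hDAinv.mul hA0).mul hDinv)).mul hB i j
    rw [hdiff, Matrix.sub_apply, Matrix.sub_apply, diagonal_apply_ne _ hij]
    linarith [hEZ i j hij]
  · rw [schurElimF_splitM₁, schurElimF_fromBlocks]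
    exact (hE.sub ((isHermitian_iff_isSymm.1 hDA.isHermitian).inv.transpose_mul_mul B)).sub
      ((isSymm_diagonal _).sub ((isHermitian_iff_isSymm.1 hD.isHermitian).inv.transpose_mul_mul B))
  · rw [schurElimF_sub_schurElimF_splitM₁_mulVec_one hDA.det_pos.ne'.isUnit]
    exact add_nonneg hs (hB.transpose.mulVec_nonneg (hDAinv.mulVec_nonneg hr))

theorem splitM₂_eq_fromBlocks (hD : D.IsSymm) (hA : A.IsSymm) :
    splitM₂ D A B E = fromBlocks (D - A * D⁻¹ * A) ((1 + A * D⁻¹) * B) ((1 + A * D⁻¹) * B)ᴴ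
      ((2 : ℝ) • E - diagonal ((Bᵀ * D⁻¹ * B) *ᵥ 1)) := by
  rw [splitM₂, conjTranspose_eq_transpose_of_trivial, transpose_mul, transpose_add, transpose_one,
    transpose_mul, hA.eq, hD.inv.eq]

theorem isZMatrix_splitM₂ (hDdiag : D.IsDiag) (hDinv : EntrywiseNonneg D⁻¹)
    (hA0 : EntrywiseNonneg A) (hB : EntrywiseNonneg (-B)) (hEZ : IsZMatrix E) :
    IsZMatrix (splitM₂ D A B E) := by
  refine isZMatrix_fromBlocks_iff.2 ⟨fun i j hij => ?_, ?_, ?_, fun i j hij => ?_⟩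
  · simpa [hDdiag hij] using (hA0.mul hDinv).mul hA0 i j
  · simpa using (entrywiseNonneg_one.add (hA0.mul hDinv)).mul hB
  · simpa using hB.transpose.mul (entrywiseNonneg_one.add (hDinv.mul hA0))
  · simp [diagonal_apply_ne _ hij]
    linarith [hEZ i j hij]

theorem posDef_splitM₂ (hD : D.PosDef) (hA : A.IsSymm) (hDA : (D - A).PosDef)
    (hZ : (D - A * D⁻¹ * A).PosDef) (hS : (schurElimF (fromBlocks (D - A) B Bᵀ E)).PosDef)
    (hSS₁ : (schurElimF (fromBlocks (D - A) B Bᵀ E) - schurElimF (splitM₁ D B)).PosSemidef) :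
    (splitM₂ D A B E).PosDef := by
  have hsplit := schurElimF_splitM₂ (B := B) (E := E) hD.det_pos.ne'.isUnit
    hDA.det_pos.ne'.isUnit hZ.det_pos.ne'.isUnit
  have hM₂ := splitM₂_eq_fromBlocks (B := B) (E := E) (isHermitian_iff_isSymm.1 hD.isHermitian) hA
  rw [hM₂, schurElimF_fromBlocks] at hsplit
  rw [hM₂, posDef_fromBlocks₁₁_iff _ _ hZ, hsplit, two_smul, add_sub_assoc]
  exact hS.add_posSemidef hSS₁

theorem isSDDM_splitM₂ (hDdiag : D.IsDiag) (hA : A.IsSymm) (hA0 : EntrywiseNonneg A)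
    (hM : IsSDDM (fromBlocks (D - A) B Bᵀ E)) : IsSDDM (splitM₂ D A B E) := by
  obtain ⟨hMsymm, hMpd, hMZ, hMrow⟩ := isSDDM_iff.1 hM
  obtain ⟨-, -, -, hE⟩ := isSymm_fromBlocks_iff.1 hMsymm
  obtain ⟨hDAZ, hB, -, hEZ⟩ := isZMatrix_fromBlocks_iff.1 hMZ
  obtain ⟨hr, hs⟩ : 0 ≤ (D - A) *ᵥ 1 + B *ᵥ 1 ∧ 0 ≤ Bᵀ *ᵥ 1 + E *ᵥ 1 := by
    simpa [fromBlocks_mulVec, Pi.le_def] using hMrow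
  have hDA : (D - A).PosDef := hMpd.submatrix Sum.inl_injective
  have hD : D.PosDef := hDdiag.posDef_of_posDef_sub hA0 hDA
  have hDinv : EntrywiseNonneg D⁻¹ :=
    IsZMatrix.entrywiseNonneg_inv (fun i j h => (hDdiag h).le) hD
  have hZ : (D - A * D⁻¹ * A).PosDef :=
    hD.sub_mul_inv_mul hA hDA (hDdiag.posDef_add_of_posDef_sub hA hA0 hDA)
  have hS : (schurElimF (fromBlocks (D - A) B Bᵀ E)).PosDef := by
    rw [schurElimF_fromBlocks, ← conjTranspose_eq_transpose_of_trivial,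
      ← posDef_fromBlocks₁₁_iff _ _ hDA, conjTranspose_eq_transpose_of_trivial]
    exact hMpd
  refine isSDDM_iff.2 ⟨?_, posDef_splitM₂ hD hA hDA hZ hS
    (posSemidef_schurElimF_sub_schurElimF_splitM₁ hD hDinv hA0 hDA hDAZ hB hE hEZ hr hs),
    isZMatrix_splitM₂ hDdiag hDinv hA0 hB hEZ, ?_⟩
  · rw [splitM₂_eq_fromBlocks hDdiag.isSymm hA]
    exact (isHermitian_iff_isSymm.1 hZ.isHermitian).fromBlocks
      (conjTranspose_eq_transpose_of_trivial _).symm ((hE.smul 2).sub (isSymm_diagonal _))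
  · rw [splitM₂_mulVec_one hD.det_pos.ne'.isUnit, Pi.le_def, Sum.forall]
    exact ⟨(entrywiseNonneg_one.add (hA0.mul hDinv)).mulVec_nonneg hr,
      add_nonneg (smul_nonneg zero_le_two hs) (hB.transpose.mulVec_nonneg (hDinv.mulVec_nonneg hr))⟩

end Splitting

theorem schur_splitting_general {F C : Type*} [Fintype F] [Fintype C] [DecidableEq F] [DecidableEq C]
    (D A : Matrix F F ℝ) (MFC : Matrix F C ℝ) (MCF : Matrix C F ℝ) (MCC : Matrix C C ℝ)
    (hDdiag : ∀ i j, i ≠ j → D i j = 0)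
    (hAsym : A.IsSymm) (hAnn : ∀ i j, 0 ≤ A i j)
    (hM : IsSDDM (Matrix.fromBlocks (D - A) MFC MCF MCC)) :
    IsLaplacian (schurElimF (Matrix.fromBlocks D MFC MCF
        (Matrix.diagonal ((MCF * D⁻¹ * MFC) *ᵥ fun _ => (1 : ℝ))))) ∧
    IsSDDM (Matrix.fromBlocks (D - A * D⁻¹ * A) (((1 : Matrix F F ℝ) + A * D⁻¹) * MFC)
        (MCF * ((1 : Matrix F F ℝ) + D⁻¹ * A))
        ((2 : ℝ) • MCC - Matrix.diagonal ((MCF * D⁻¹ * MFC) *ᵥ fun _ => (1 : ℝ)))) ∧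
    schurElimF (Matrix.fromBlocks (D - A) MFC MCF MCC) =
      (1 / 2 : ℝ) •
        (schurElimF (Matrix.fromBlocks D MFC MCF
            (Matrix.diagonal ((MCF * D⁻¹ * MFC) *ᵥ fun _ => (1 : ℝ)))) +
         schurElimF (Matrix.fromBlocks (D - A * D⁻¹ * A) (((1 : Matrix F F ℝ) + A * D⁻¹) * MFC)
            (MCF * ((1 : Matrix F F ℝ) + D⁻¹ * A))
            ((2 : ℝ) • MCC - Matrix.diagonal ((MCF * D⁻¹ * MFC) *ᵥ fun _ => (1 : ℝ))))) := by
  obtain ⟨-, rfl, -, -⟩ := isSymm_fromBlocks_iff.1 hM.1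
  have hDA : (D - A).PosDef := hM.2.1.submatrix Sum.inl_injective
  have hD : D.PosDef := Matrix.IsDiag.posDef_of_posDef_sub hDdiag hAnn hDA
  have hDinv : EntrywiseNonneg D⁻¹ :=
    IsZMatrix.entrywiseNonneg_inv (fun i j h => (hDdiag i j h).le) hD
  have hZ : (D - A * D⁻¹ * A).PosDef :=
    hD.sub_mul_inv_mul hAsym hDA (Matrix.IsDiag.posDef_add_of_posDef_sub hDdiag hAsym hAnn hDA)
  have hB : EntrywiseNonneg (-MFC) := (isZMatrix_fromBlocks_iff.1 hM.2.2.1).2.1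
  have hsplit := schurElimF_splitM₂ (A := A) (B := MFC) (E := MCC) hD.det_pos.ne'.isUnit
    hDA.det_pos.ne'.isUnit hZ.det_pos.ne'.isUnit
  refine ⟨isLaplacian_schurElimF_splitM₁ (isHermitian_iff_isSymm.1 hD.isHermitian) hDinv hB,
    isSDDM_splitM₂ hDdiag hAsym hAnn hM, ?_⟩
  change _ = (1 / 2 : ℝ) • (schurElimF (splitM₁ D MFC) + schurElimF (splitM₂ D A MFC MCC))
  rw [hsplit]
  module

/-- splitting of the Schur complement: for an SDDM matrix
`M = [[D − A, M_FC],[M_CF, M_CC]]` with `D` diagonal and `A` nonnegative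
symmetric with zero diagonal, setting
`M₁ = [[D, M_FC],[M_CF, diag(M_CF·D⁻¹·M_FC·1)]]` and
`M₂ = [[D − A·D⁻¹·A, (I + A·D⁻¹)·M_FC],[M_CF·(I + D⁻¹·A), 2·M_CC − diag(M_CF·D⁻¹·M_FC·1)]]`,
`Schur(M₁,F)` is a Laplacian, `M₂` is SDDM and
`Schur(M,F) = ½(Schur(M₁,F) + Schur(M₂,F))`. -/
theorem schur_splitting {F C : Type*} [Fintype F] [Fintype C] [DecidableEq F] [DecidableEq C]
    (D A : Matrix F F ℝ) (MFC : Matrix F C ℝ) (MCF : Matrix C F ℝ) (MCC : Matrix C C ℝ)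
    (hDdiag : ∀ i j, i ≠ j → D i j = 0)
    (hAsym : A.IsSymm) (hAnn : ∀ i j, 0 ≤ A i j) (hAdiag : ∀ i, A i i = 0)
    (hM : IsSDDM (Matrix.fromBlocks (D - A) MFC MCF MCC)) :
    IsLaplacian (schurElimF (Matrix.fromBlocks D MFC MCF
        (Matrix.diagonal ((MCF * D⁻¹ * MFC) *ᵥ fun _ => (1 : ℝ))))) ∧
    IsSDDM (Matrix.fromBlocks (D - A * D⁻¹ * A) (((1 : Matrix F F ℝ) + A * D⁻¹) * MFC)
        (MCF * ((1 : Matrix F F ℝ) + D⁻¹ * A))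
        ((2 : ℝ) • MCC - Matrix.diagonal ((MCF * D⁻¹ * MFC) *ᵥ fun _ => (1 : ℝ)))) ∧
    schurElimF (Matrix.fromBlocks (D - A) MFC MCF MCC) =
      (1 / 2 : ℝ) •
        (schurElimF (Matrix.fromBlocks D MFC MCF
            (Matrix.diagonal ((MCF * D⁻¹ * MFC) *ᵥ fun _ => (1 : ℝ)))) +
         schurElimF (Matrix.fromBlocks (D - A * D⁻¹ * A) (((1 : Matrix F F ℝ) + A * D⁻¹) * MFC)
            (MCF * ((1 : Matrix F F ℝ) + D⁻¹ * A))
            ((2 : ℝ) • MCC - Matrix.diagonal ((MCF * D⁻¹ * MFC) *ᵥ fun _ => (1 : ℝ))))) :=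
  schur_splitting_general D A MFC MCF MCC hDdiag hAsym hAnn hM
end
end

section
/- Let D be a diagonal matrix with positive diagonal entries and A a symmetric matrix with zero diagonal such that D − A is α-strongly diagonally dominant for some α ≥ 0. Then D − A·D^{−1}·A is ((1+α)² − 1)-strongly diagonally dominant. -/
/-!
Write `D = diagonal d`, `c = 1 + α` and `S k = ∑ j, |A k j|`, so the hypothesis reads `c * S k ≤ d k`.
Row `i` of `A D⁻¹ A` has off-diagonal absolute sum at most
`∑ k, |A i k| (S k - |A i k|) / d k ≤ S i / c - T`, where `T = ∑ k, A i k ^ 2 / d k` is exactly the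
amount `A D⁻¹ A` subtracts from the diagonal entry `d i`. Hence
`c² (S i / c - T) = c S i - c² T ≤ d i - T`.
-/

open Matrix BigOperators Finset
open scoped Classical

noncomputable section

namespace Matrix

variable {n : Type*} [Fintype n] [DecidableEq n]

lemma inv_diagonal_of_ne_zero {d : n → ℝ} (hd : ∀ i, d i ≠ 0) :
    (diagonal d)⁻¹ = diagonal d⁻¹ :=
  inv_eq_right_inv <| by
    rw [diagonal_mul_diagonal, ← diagonal_one]
    exact congrArg diagonal (funext fun i => mul_inv_cancel₀ (hd i))

lemma mul_diagonal_mul_apply (A B : Matrix n n ℝ) (w : n → ℝ) (i j : n) :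
    (A * diagonal w * B) i j = ∑ k, A i k * w k * B k j := by
  rw [mul_apply]
  simp only [mul_diagonal]

lemma isStronglyDD_diagonal_sub_iff {α : ℝ} {d : n → ℝ} {A : Matrix n n ℝ}
    (hA : ∀ i, A i i = 0) :
    IsStronglyDD α (diagonal d - A) ↔ ∀ i, (1 + α) * ∑ j, |A i j| ≤ d i := by
  refine forall_congr' fun i => ?_
  have hoff : ∑ j ∈ univ.erase i, |(diagonal d - A) i j| = ∑ j, |A i j| := by
    rw [← sum_erase univ (f := fun j => |A i j|) (a := i) (by simp [hA i])]
    refine sum_congr rfl fun j hj => ?_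
    rw [sub_apply, diagonal_apply_ne _ (ne_of_mem_erase hj).symm, zero_sub, abs_neg]
  rw [hoff, sub_apply, diagonal_apply_eq, hA i, sub_zero]

lemma IsSymm.sum_erase_abs_mul_diagonal_mul_le {A : Matrix n n ℝ} (hA : A.IsSymm) {w : n → ℝ}
    (hw : ∀ k, 0 ≤ w k) (i : n) :
    ∑ j ∈ univ.erase i, |(A * diagonal w * A) i j|
      ≤ ∑ k, w k * |A i k| * (∑ j, |A k j| - |A i k|) :=
  calc ∑ j ∈ univ.erase i, |(A * diagonal w * A) i j|
      ≤ ∑ j ∈ univ.erase i, ∑ k, w k * |A i k| * |A k j| := by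
        refine sum_le_sum fun j _ => ?_
        rw [mul_diagonal_mul_apply]
        refine (abs_sum_le_sum_abs _ _).trans_eq (sum_congr rfl fun k _ => ?_)
        rw [abs_mul, abs_mul, abs_of_nonneg (hw k)]
        ring
    _ = ∑ k, w k * |A i k| * (∑ j, |A k j| - |A i k|) := by
        rw [sum_comm]
        refine sum_congr rfl fun k _ => ?_
        rw [← mul_sum, sum_erase_eq_sub (mem_univ i), hA.apply i k]

lemma IsSymm.mul_diagonal_mul_apply_self {A : Matrix n n ℝ} (hA : A.IsSymm) (w : n → ℝ) (i : n) :
    (A * diagonal w * A) i i = ∑ k, w k * A i k ^ 2 := by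
  rw [mul_diagonal_mul_apply]
  refine sum_congr rfl fun k _ => ?_
  rw [hA.apply k i]
  ring

theorem isStronglyDD_diagonal_sub_mul_inv_mul {α : ℝ} (hα : 0 ≤ α) {d : n → ℝ}
    (hd : ∀ i, 0 < d i) {A : Matrix n n ℝ} (hAsym : A.IsSymm) (hAdiag : ∀ i, A i i = 0)
    (hdd : IsStronglyDD α (diagonal d - A)) :
    IsStronglyDD ((1 + α) ^ 2 - 1) (diagonal d - A * (diagonal d)⁻¹ * A) := by
  rw [isStronglyDD_diagonal_sub_iff hAdiag] at hdd
  rw [inv_diagonal_of_ne_zero fun i => (hd i).ne']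
  intro i
  set c := 1 + α
  set S : n → ℝ := fun k => ∑ j, |A k j|
  set T := ∑ k, (d k)⁻¹ * A i k ^ 2
  have hc : 1 ≤ c := by linarith
  have hT : 0 ≤ T := sum_nonneg fun k _ => mul_nonneg (inv_pos.2 (hd k)).le (sq_nonneg _)
  have hoff : ∑ j ∈ univ.erase i, |(diagonal d - A * diagonal d⁻¹ * A) i j| ≤ S i / c - T :=
    calc ∑ j ∈ univ.erase i, |(diagonal d - A * diagonal d⁻¹ * A) i j|
        = ∑ j ∈ univ.erase i, |(A * diagonal d⁻¹ * A) i j| := sum_congr rfl fun j hj => by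
          rw [sub_apply, diagonal_apply_ne _ (ne_of_mem_erase hj).symm, zero_sub, abs_neg]
      _ ≤ ∑ k, (d k)⁻¹ * |A i k| * (S k - |A i k|) :=
          hAsym.sum_erase_abs_mul_diagonal_mul_le (fun k => (inv_pos.2 (hd k)).le) i
      _ ≤ ∑ k, (|A i k| / c - (d k)⁻¹ * A i k ^ 2) := sum_le_sum fun k _ => by
          have hSk : S k / d k ≤ 1 / c := by
            rw [div_le_div_iff₀ (hd k) (by linarith)]
            linarith [hdd k]
          calc (d k)⁻¹ * |A i k| * (S k - |A i k|)
              = |A i k| * (S k / d k) - (d k)⁻¹ * |A i k| ^ 2 := by ring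
            _ ≤ |A i k| * (1 / c) - (d k)⁻¹ * |A i k| ^ 2 := by gcongr
            _ = |A i k| / c - (d k)⁻¹ * A i k ^ 2 := by rw [sq_abs]; ring
      _ = S i / c - T := by rw [sum_sub_distrib, ← sum_div]
  have hdiag : (diagonal d - A * diagonal d⁻¹ * A) i i = d i - T := by
    rw [sub_apply, diagonal_apply_eq, hAsym.mul_diagonal_mul_apply_self]
    rfl
  calc (1 + (c ^ 2 - 1)) * ∑ j ∈ univ.erase i, |(diagonal d - A * diagonal d⁻¹ * A) i j|
      ≤ c ^ 2 * (S i / c - T) := by rw [add_sub_cancel]; gcongr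
    _ = c * S i - c ^ 2 * T := by field_simp
    _ ≤ d i - T := by linarith [hdd i, le_mul_of_one_le_left hT (one_le_pow₀ (n := 2) hc)]
    _ = _ := hdiag.symm

end Matrix

/-- if `D` is diagonal with positive diagonal, `A` symmetric with
zero diagonal, and `D − A` is α-strongly diagonally dominant (`α ≥ 0`), then
`D − A·D⁻¹·A` is `((1+α)² − 1)`-strongly diagonally dominant. -/
theorem strongly_dd_improves {n : Type*} [Fintype n] [DecidableEq n]
    (D A : Matrix n n ℝ) (α : ℝ) (hα : 0 ≤ α)
    (hDdiag : ∀ i j, i ≠ j → D i j = 0) (hDpos : ∀ i, 0 < D i i)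
    (hAsym : A.IsSymm) (hAdiag : ∀ i, A i i = 0)
    (hdd : IsStronglyDD α (D - A)) :
    IsStronglyDD ((1 + α) ^ 2 - 1) (D - A * D⁻¹ * A) := by
  obtain ⟨d, rfl⟩ : ∃ d, D = diagonal d := ⟨_, ((isDiag_iff_diagonal_diag D).mp hDdiag).symm⟩
  exact isStronglyDD_diagonal_sub_mul_inv_mul hα (fun i => by simpa using hDpos i) hAsym hAdiag hdd
end
end

section
/- Let X be a nonnegative diagonal matrix and Y, Ỹ Laplacian matrices of the same size such that X + Y is α-strongly diagonally dominant for some α ≥ 0 and Y ≈_ε Ỹ. Then X + Ỹ is e^{−ε}·α-strongly diagonally dominant. -/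
open Matrix BigOperators Finset
open scoped Classical

noncomputable section

/-! Off the diagonal `X + L` agrees with the Laplacian `L`, whose off-diagonal absolute row sum is
`L i i`; so `α`-strong diagonal dominance of `X + L` says exactly `α • diag L ≤ X`. The
approximation `Y ≈_ε Ỹ` gives `e^{-ε} • diag Ỹ ≤ diag Y` on the diagonal, and chaining the two
inequalities yields the claim. -/

lemma PSDLE.diag_le {n : Type*} [Fintype n] {A B : Matrix n n ℝ} (h : PSDLE A B) (i : n) :
    A i i ≤ B i i :=
  sub_nonneg.mp (h.diag_nonneg (i := i))

lemma ApproxEps.exp_neg_mul_diag_le {n : Type*} [Fintype n] {A B : Matrix n n ℝ} {ε : ℝ}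
    (h : ApproxEps A ε B) (i : n) : Real.exp (-ε) * B i i ≤ A i i :=
  h.2.diag_le i

lemma IsLaplacian.sum_abs_offDiag_eq_diag_s12 {n : Type*} [Fintype n] [DecidableEq n]
    {L : Matrix n n ℝ} (hL : IsLaplacian L) (i : n) :
    ∑ j ∈ univ.erase i, |L i j| = L i i := by
  have habs : ∀ j ∈ univ.erase i, |L i j| = -L i j := fun j hj =>
    abs_of_nonpos (hL.2.1 i j (Finset.ne_of_mem_erase hj).symm)
  have hrow : L i i + ∑ j ∈ univ.erase i, L i j = 0 := by
    rw [add_sum_erase _ _ (mem_univ i)]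
    exact hL.2.2 i
  rw [sum_congr rfl habs, sum_neg_distrib]
  linarith

lemma IsLaplacian.sum_abs_offDiag_add_eq_diag {n : Type*} [Fintype n] [DecidableEq n]
    {X L : Matrix n n ℝ} (hX : ∀ i j, i ≠ j → X i j = 0) (hL : IsLaplacian L) (i : n) :
    ∑ j ∈ univ.erase i, |(X + L) i j| = L i i := by
  rw [← hL.sum_abs_offDiag_eq_diag_s12 i]
  refine sum_congr rfl fun j hj => ?_
  rw [Matrix.add_apply, hX i j (Finset.ne_of_mem_erase hj).symm, zero_add]

lemma isStronglyDD_add_laplacian_iff {n : Type*} [Fintype n] [DecidableEq n]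
    {X L : Matrix n n ℝ} (α : ℝ) (hX : ∀ i j, i ≠ j → X i j = 0) (hL : IsLaplacian L) :
    IsStronglyDD α (X + L) ↔ ∀ i, α * L i i ≤ X i i := by
  refine forall_congr' fun i => ?_
  rw [hL.sum_abs_offDiag_add_eq_diag hX i, Matrix.add_apply]
  constructor <;> intro h <;> linarith

theorem strongly_dd_stable_under_sparsification_general {n : Type*} [Fintype n] [DecidableEq n]
    (X Y Yt : Matrix n n ℝ) (α ε : ℝ) (hα : 0 ≤ α)
    (hXdiag : ∀ i j, i ≠ j → X i j = 0)
    (hY : IsLaplacian Y) (hYt : IsLaplacian Yt)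
    (hdd : IsStronglyDD α (X + Y))
    (happrox : ApproxEps Y ε Yt) :
    IsStronglyDD (Real.exp (-ε) * α) (X + Yt) := by
  rw [isStronglyDD_add_laplacian_iff _ hXdiag hY] at hdd
  rw [isStronglyDD_add_laplacian_iff _ hXdiag hYt]
  intro i
  calc Real.exp (-ε) * α * Yt i i = α * (Real.exp (-ε) * Yt i i) := by ring
    _ ≤ α * Y i i := mul_le_mul_of_nonneg_left (happrox.exp_neg_mul_diag_le i) hα
    _ ≤ X i i := hdd i

/-- if `X` is a nonnegative diagonal matrix, `Y, Ỹ` Laplacians,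
`X + Y` is α-strongly diagonally dominant (`α ≥ 0`) and `Y ≈_ε Ỹ`, then
`X + Ỹ` is `e^{−ε}·α`-strongly diagonally dominant. -/
theorem strongly_dd_stable_under_sparsification {n : Type*} [Fintype n] [DecidableEq n]
    (X Y Yt : Matrix n n ℝ) (α ε : ℝ) (hα : 0 ≤ α) (hε : 0 ≤ ε)
    (hXdiag : ∀ i j, i ≠ j → X i j = 0) (hXnn : ∀ i, 0 ≤ X i i)
    (hY : IsLaplacian Y) (hYt : IsLaplacian Yt)
    (hdd : IsStronglyDD α (X + Y))
    (happrox : ApproxEps Y ε Yt) :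
    IsStronglyDD (Real.exp (-ε) * α) (X + Yt) :=
  strongly_dd_stable_under_sparsification_general X Y Yt α ε hα hXdiag hY hYt hdd happrox
end
end
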